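/- arXiv:2308.08959 — 8 statements merged into one kernel-verified Lean document; each statement's English description precedes it below -/
import Mathlib

section
/- (Trek rule) Let G = (V,E) be a DAG, Λ ∈ ℝ^E, and ω ∈ (0,∞)^V. Define Σ = (I−Λ)^{-T} diag(ω) (I−Λ)^{-1}. Then for all i,j ∈ V, the entry Σ_{ij} equals the sum over all treks τ between i and j of the trek monomial ω_{i₀} ∏_{k→l ∈ τ} λ_{kl}, where i₀ is the top node of τ. -/
/-! Prepending an edge `a → c` to a directed path from `c` gives every nonempty directed path from
`a`, so the matrix `N` of path-weight sums satisfies `N = 1 + Λ N`, i.e. `N = (1 - Λ)⁻¹`;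
acyclicity makes every directed path simple, so these sums are finite. Then
`Cov i j = ∑ c, N c i * ω c * N c j`, and expanding both factors gives the sum over treks grouped
by their top node `c`. -/

open Matrix

/-- `p` is a directed path in `E` from `a` to `b`: the vertex sequence is `a :: p`,
consecutive vertices are joined by edges of `E`, and the last vertex is `b`. -/
def IsDirPath {V : Type*} (E : V → V → Prop) (a b : V) (p : List V) : Prop :=
  List.Chain E a p ∧ (a :: p).getLast (List.cons_ne_nil a p) = b

/-- The product of the edge weights `Λ k l` over the consecutive edges of the
vertex sequence `a :: p`. -/
def pathWeight {V : Type*} (Λ : Matrix V V ℝ) (a : V) (p : List V) : ℝ :=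
  (((a :: p).zip p).map (fun q => Λ q.1 q.2)).prod

section Paths

variable {V : Type*}

section DirPath

variable {E : V → V → Prop} {a b c : V} {p : List V}

lemma isDirPath_iff :
    IsDirPath E a b p ↔ (a :: p).IsChain E ∧ (a :: p).getLast (List.cons_ne_nil a p) = b :=
  Iff.rfl

@[simp]
lemma isDirPath_nil : IsDirPath E a b [] ↔ a = b := by
  simp [isDirPath_iff]

@[simp]
lemma isDirPath_cons : IsDirPath E a b (c :: p) ↔ E a c ∧ IsDirPath E c b p := by
  simp [isDirPath_iff, List.getLast_cons, and_assoc]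

lemma IsDirPath.nodup (hacyc : ∀ i, ¬ Relation.TransGen E i i) (h : IsDirPath E a b p) :
    (a :: p).Nodup := by
  have hchain : (a :: p).IsChain (Relation.TransGen E) :=
    (isDirPath_iff.mp h).1.imp fun _ _ => .single
  refine (List.isChain_iff_pairwise.mp hchain).imp ?_
  rintro x _ hxy rfl
  exact hacyc x hxy

lemma finite_setOf_isDirPath [Fintype V] (hacyc : ∀ i, ¬ Relation.TransGen E i i) (a b : V) :
    {p | IsDirPath E a b p}.Finite :=
  (List.finite_length_lt V (Fintype.card V)).subset fun p hp => by
    simpa using (IsDirPath.nodup hacyc hp).length_le_card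

end DirPath

@[simp]
lemma pathWeight_nil (Λ : Matrix V V ℝ) (a : V) : pathWeight Λ a [] = 1 := by
  simp [pathWeight]

@[simp]
lemma pathWeight_cons (Λ : Matrix V V ℝ) (a c : V) (p : List V) :
    pathWeight Λ a (c :: p) = Λ a c * pathWeight Λ c p := by
  simp [pathWeight, List.zip_cons_cons]

lemma setOf_isDirPath_eq {E : V → V → Prop} (a b : V) :
    {p | IsDirPath E a b p} =
      {p | p = [] ∧ a = b} ∪ ⋃ c, List.cons c '' {q | E a c ∧ IsDirPath E c b q} := by
  ext (_ | ⟨c, q⟩) <;> simp [eq_comm]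

noncomputable def pathSumMatrix (E : V → V → Prop) (Λ : Matrix V V ℝ) : Matrix V V ℝ :=
  Matrix.of fun a b => ∑ᶠ p ∈ {p | IsDirPath E a b p}, pathWeight Λ a p

lemma pathSumMatrix_apply (E : V → V → Prop) (Λ : Matrix V V ℝ) (a b : V) :
    pathSumMatrix E Λ a b = ∑ᶠ p ∈ {p | IsDirPath E a b p}, pathWeight Λ a p :=
  rfl

section PathSum

variable [Fintype V] [DecidableEq V] {E : V → V → Prop} {Λ : Matrix V V ℝ}

lemma pathSumMatrix_eq_one_add_mul (hacyc : ∀ i, ¬ Relation.TransGen E i i)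
    (hsupp : ∀ i j, ¬ E i j → Λ i j = 0) :
    pathSumMatrix E Λ = 1 + Λ * pathSumMatrix E Λ := by
  ext a b
  have hfin_cons (c : V) : (List.cons c '' {q | E a c ∧ IsDirPath E c b q}).Finite :=
    ((finite_setOf_isDirPath hacyc c b).subset fun _ hq => hq.2).image _
  have hnil :
      ∑ᶠ p ∈ {p : List V | p = [] ∧ a = b}, pathWeight Λ a p = (1 : Matrix V V ℝ) a b := by
    by_cases hab : a = b <;> simp [hab, Matrix.one_apply]
  have hcons (c : V) :
      ∑ᶠ p ∈ List.cons c '' {q | E a c ∧ IsDirPath E c b q}, pathWeight Λ a p =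
        Λ a c * pathSumMatrix E Λ c b := by
    rw [finsum_mem_image List.cons_injective.injOn]
    by_cases hac : E a c
    · simp only [hac, true_and, pathWeight_cons, pathSumMatrix_apply]
      exact (mul_finsum_mem' _ _ (finite_setOf_isDirPath hacyc c b)).symm
    · simp [hac, hsupp a c hac]
  rw [pathSumMatrix_apply, setOf_isDirPath_eq, finsum_mem_union, finsum_mem_iUnion, hnil,
    finsum_eq_sum_of_fintype]
  · simp only [hcons, Matrix.add_apply, Matrix.mul_apply]
  · intro c d hcd
    refine Set.disjoint_left.mpr ?_
    rintro _ ⟨q, _, rfl⟩ ⟨q', _, h⟩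
    exact hcd (List.cons_eq_cons.mp h).1.symm
  · exact hfin_cons
  · simp [Set.disjoint_left]
  · exact (Set.finite_singleton []).subset fun _ hp => hp.1
  · exact Set.finite_iUnion hfin_cons

theorem inv_one_sub_eq_pathSumMatrix (hacyc : ∀ i, ¬ Relation.TransGen E i i)
    (hsupp : ∀ i j, ¬ E i j → Λ i j = 0) :
    (1 - Λ)⁻¹ = pathSumMatrix E Λ := by
  refine Matrix.inv_eq_right_inv ?_
  rw [sub_mul, one_mul, sub_eq_iff_eq_add]
  exact pathSumMatrix_eq_one_add_mul hacyc hsupp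

end PathSum

end Paths

lemma finsum_mem_mul_finsum_mem {α β R : Type*} [NonUnitalNonAssocSemiring R] {s : Set α}
    {t : Set β} (hs : s.Finite) (ht : t.Finite) (f : α → R) (g : β → R) :
    (∑ᶠ a ∈ s, f a) * ∑ᶠ b ∈ t, g b = ∑ᶠ x ∈ s ×ˢ t, f x.1 * g x.2 := by
  rw [finsum_mem_eq_finite_toFinset_sum _ hs, finsum_mem_eq_finite_toFinset_sum _ ht,
    finsum_mem_eq_finite_toFinset_sum _ (hs.prod ht), ← Set.Finite.toFinset_prod,
    Finset.sum_mul_sum, Finset.sum_product]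

lemma finsum_mem_setOf_snd_mem {α β M : Type*} [AddCommMonoid M] [Finite α] {s : α → Set β}
    (hs : ∀ a, (s a).Finite) (f : α × β → M) :
    ∑ᶠ x ∈ {x : α × β | x.2 ∈ s x.1}, f x = ∑ᶠ a, ∑ᶠ b ∈ s a, f (a, b) := by
  have hunion : {x : α × β | x.2 ∈ s x.1} = ⋃ a, Prod.mk a '' s a := by
    ext ⟨a, b⟩
    simp
  rw [hunion, finsum_mem_iUnion ?_ fun a => (hs a).image _]
  · simp only [finsum_mem_image (Prod.mk_right_injective _).injOn]
  · intro a a' ha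
    refine Set.disjoint_left.mpr ?_
    rintro _ ⟨_, _, rfl⟩ ⟨_, _, h⟩
    exact ha (congrArg Prod.fst h).symm

/-- A trek between `i` and `j` is encoded as a triple `(i₀, pL, pR)`: its top node `i₀` together
with the directed paths `pL` from `i₀` to `i` and `pR` from `i₀` to `j`. -/
theorem stmt2_general {V : Type*} [Fintype V] [DecidableEq V]
    (E : V → V → Prop) (hacyc : ∀ i, ¬ Relation.TransGen E i i)
    (Λ : Matrix V V ℝ) (hsupp : ∀ i j, ¬ E i j → Λ i j = 0)
    (ω : V → ℝ)
    (Cov : Matrix V V ℝ)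
    (hCov : Cov = ((1 - Λ)ᵀ)⁻¹ * Matrix.diagonal ω * (1 - Λ)⁻¹) :
    ∀ i j : V, Cov i j =
      ∑ᶠ t ∈ {t : V × List V × List V |
          IsDirPath E t.1 i t.2.1 ∧ IsDirPath E t.1 j t.2.2},
        ω t.1 * pathWeight Λ t.1 t.2.1 * pathWeight Λ t.1 t.2.2 := by
  intro i j
  have hpaths := finite_setOf_isDirPath hacyc (E := E)
  have htreks : {t : V × List V × List V | IsDirPath E t.1 i t.2.1 ∧ IsDirPath E t.1 j t.2.2} =
      {t | t.2 ∈ {p | IsDirPath E t.1 i p} ×ˢ {q | IsDirPath E t.1 j q}} :=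
    rfl
  rw [htreks, finsum_mem_setOf_snd_mem fun c => (hpaths c i).prod (hpaths c j),
    finsum_eq_sum_of_fintype, hCov, ← transpose_nonsing_inv,
    inv_one_sub_eq_pathSumMatrix hacyc hsupp, mul_apply]
  refine Finset.sum_congr rfl fun c _ => ?_
  rw [mul_diagonal, transpose_apply, mul_comm (pathSumMatrix E Λ c i), mul_assoc,
    pathSumMatrix_apply, pathSumMatrix_apply, finsum_mem_mul_finsum_mem (hpaths c i) (hpaths c j),
    mul_finsum_mem' _ _ ((hpaths c i).prod (hpaths c j))]
  simp only [mul_assoc]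

/-- Trek rule: for a DAG `G`, `Λ ∈ ℝ^E` and positive `ω`, the entry
`Σ i j` of `Σ = (I-Λ)^{-T} diag(ω) (I-Λ)^{-1}` is the sum over all treks between `i`
and `j` of the trek monomial `ω_{i₀} ∏_{k→l ∈ τ} λ_{kl}`.  A trek between `i` and `j`
is encoded as a triple `(i₀, pL, pR)` of a top node `i₀` together with a directed path
`pL` from `i₀` to `i` (the left side) and a directed path `pR` from `i₀` to `j`. -/
theorem stmt2 {V : Type*} [Fintype V] [DecidableEq V]
    (E : V → V → Prop) (hacyc : ∀ i, ¬ Relation.TransGen E i i)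
    (Λ : Matrix V V ℝ) (hsupp : ∀ i j, ¬ E i j → Λ i j = 0)
    (ω : V → ℝ) (hω : ∀ k, 0 < ω k)
    (Cov : Matrix V V ℝ)
    (hCov : Cov = ((1 - Λ)ᵀ)⁻¹ * Matrix.diagonal ω * (1 - Λ)⁻¹) :
    ∀ i j : V, Cov i j =
      ∑ᶠ t ∈ {t : V × List V × List V |
          IsDirPath E t.1 i t.2.1 ∧ IsDirPath E t.1 j t.2.2},
        ω t.1 * pathWeight Λ t.1 t.2.1 * pathWeight Λ t.1 t.2.2 :=
  stmt2_general E hacyc Λ hsupp ω Cov hCov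
end

section
/- Let G = (V,E) be a DAG, Λ ∈ ℝ^E, ω ∈ (0,∞)^V, and Σ = (I−Λ)^{-T} diag(ω) (I−Λ)^{-1}. Fix i ∈ V and let A be any subset of V with pa(i) ⊆ A ⊆ V \ de(i). Then ω_i = Σ_{ii} − Σ_{i,A} (Σ_{A,A})^{-1} Σ_{A,i}; i.e., the error variance of node i equals the conditional variance of X_i given X_A. -/
open Matrix

/-- The conditional variance `Σ_{ii} - Σ_{i,A} (Σ_{A,A})⁻¹ Σ_{A,i}` of variable `i`
given the variables in `A`. -/
noncomputable def condVar {V : Type*} [Fintype V] [DecidableEq V]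
    (Cov : Matrix V V ℝ) (i : V) (A : Finset V) : ℝ :=
  Cov i i - ∑ a : A, ∑ b : A,
    Cov i a * (Cov.submatrix (Subtype.val : A → V) Subtype.val)⁻¹ a b * Cov b i

/-!
Write `S = (1 - Λ)⁻¹`, so that `Σ = Sᵀ diag(ω) S` and `Σ (1 - Λ) = Sᵀ diag(ω)`. Since
`pa(i) ⊆ A`, column `i` of this identity reads `Σ_{ji} - ∑_{a ∈ A} Σ_{ja} Λ_{ai} = S_{ij} ω_i`
for every `j`. A nonzero entry `(Λᵏ)_{ij}` forces a path of length `k` from `i` to `j`, along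
which the number of strict descendants drops by at least `k`; so `Λ^|V| = 0`, `S = ∑ₖ Λᵏ`,
`S_{ii} = 1`, and `S_{ij} = 0` unless `j` is a descendant of `i`. As `A` contains no descendant
of `i`, the edge weights `Λ_{·i}` solve the normal equations `Σ_{AA} β = Σ_{Ai}`, and the
residual variance `Σ_{ii} - Σ_{iA} β` is `ω_i`.
-/

open Relation Finset

section Acyclic

variable {V : Type*} [Fintype V] {E : V → V → Prop}

noncomputable def nodeHeight (E : V → V → Prop) (x : V) : ℕ :=
  Set.ncard {y | TransGen E x y}

theorem nodeHeight_lt_of_rel (hacyc : ∀ i, ¬ TransGen E i i) {m j : V} (h : E m j) :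
    nodeHeight E j < nodeHeight E m :=
  Set.ncard_lt_ncard ⟨fun _ hy ↦ (TransGen.single h).trans hy,
    fun hsub ↦ hacyc j (hsub (TransGen.single h))⟩ (Set.toFinite _)

theorem nodeHeight_lt_card (hacyc : ∀ i, ¬ TransGen E i i) (x : V) :
    nodeHeight E x < Fintype.card V := by
  rw [← Nat.card_eq_fintype_card, ← Set.ncard_univ]
  exact Set.ncard_lt_ncard <|
    Set.ssubset_univ_iff.mpr fun h ↦ hacyc x (Set.eq_univ_iff_forall.mp h x)

variable {R : Type*}

theorem reflTransGen_and_nodeHeight_of_pow_apply_ne_zero [DecidableEq V] [Semiring R]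
    (hacyc : ∀ i, ¬ TransGen E i i)
    {M : Matrix V V R} (hsupp : ∀ i j, ¬ E i j → M i j = 0) (k : ℕ) {i j : V}
    (h : (M ^ k) i j ≠ 0) :
    ReflTransGen E i j ∧ nodeHeight E j + k ≤ nodeHeight E i := by
  induction k generalizing j with
  | zero =>
    obtain rfl : i = j := by by_contra hne; simp [one_apply_ne hne] at h
    exact ⟨.refl, le_rfl⟩
  | succ k ih =>
    rw [pow_succ, mul_apply] at h
    obtain ⟨m, -, hm⟩ := exists_ne_zero_of_sum_ne_zero h
    obtain ⟨hreach, hheight⟩ := ih (left_ne_zero_of_mul hm)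
    have hmj : E m j := not_not.mp (mt (hsupp m j) (right_ne_zero_of_mul hm))
    exact ⟨hreach.tail hmj, by have := nodeHeight_lt_of_rel hacyc hmj; omega⟩

variable [DecidableEq V]

theorem pow_card_eq_zero_of_acyclic [Semiring R] (hacyc : ∀ i, ¬ TransGen E i i)
    {M : Matrix V V R} (hsupp : ∀ i j, ¬ E i j → M i j = 0) :
    M ^ Fintype.card V = 0 := by
  ext i j
  by_contra h
  have := (reflTransGen_and_nodeHeight_of_pow_apply_ne_zero hacyc hsupp _ h).2
  have := nodeHeight_lt_card hacyc i
  omega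

theorem isUnit_one_sub_of_acyclic [CommRing R] (hacyc : ∀ i, ¬ TransGen E i i)
    {M : Matrix V V R} (hsupp : ∀ i j, ¬ E i j → M i j = 0) : IsUnit (1 - M) :=
  IsNilpotent.isUnit_one_sub ⟨_, pow_card_eq_zero_of_acyclic hacyc hsupp⟩

theorem inv_one_sub_eq_geom_sum [CommRing R] (hacyc : ∀ i, ¬ TransGen E i i)
    {M : Matrix V V R} (hsupp : ∀ i j, ¬ E i j → M i j = 0) :
    (1 - M)⁻¹ = ∑ k ∈ range (Fintype.card V), M ^ k :=
  inv_eq_right_inv <| by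
    rw [mul_neg_geom_sum, pow_card_eq_zero_of_acyclic hacyc hsupp, sub_zero]

theorem inv_one_sub_apply_self [CommRing R] (hacyc : ∀ i, ¬ TransGen E i i)
    {M : Matrix V V R} (hsupp : ∀ i j, ¬ E i j → M i j = 0) (i : V) :
    (1 - M)⁻¹ i i = 1 := by
  have hpos := (nodeHeight_lt_card hacyc i).pos
  rw [inv_one_sub_eq_geom_sum hacyc hsupp, Matrix.sum_apply,
    sum_eq_single_of_mem 0 (mem_range.mpr (by omega)), pow_zero, one_apply_eq]
  intro k _ hk
  by_contra h
  have := (reflTransGen_and_nodeHeight_of_pow_apply_ne_zero hacyc hsupp k h).2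
  omega

theorem inv_one_sub_apply_eq_zero [CommRing R] (hacyc : ∀ i, ¬ TransGen E i i)
    {M : Matrix V V R} (hsupp : ∀ i j, ¬ E i j → M i j = 0) {i j : V}
    (hij : ¬ ReflTransGen E i j) : (1 - M)⁻¹ i j = 0 := by
  rw [inv_one_sub_eq_geom_sum hacyc hsupp, Matrix.sum_apply]
  exact sum_eq_zero fun k _ ↦ not_not.mp
    (mt (fun h ↦ (reflTransGen_and_nodeHeight_of_pow_apply_ne_zero hacyc hsupp k h).1) hij)

end Acyclic

section LinearSEM

variable {V : Type*} [Fintype V] [DecidableEq V]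

theorem mul_one_sub_apply_eq_sub_sum {R : Type*} [CommRing R] (M Λ : Matrix V V R)
    {A : Finset V} {i : V} (hΛ : ∀ m ∉ A, Λ m i = 0) (j : V) :
    (M * (1 - Λ)) j i = M j i - ∑ a ∈ A, M j a * Λ a i := by
  rw [mul_sub, mul_one, Matrix.sub_apply, mul_apply,
    sum_subset (subset_univ A) fun m _ hm ↦ by rw [hΛ m hm, mul_zero]]

theorem cov_sub_sum_mul_eq_inv_apply_mul {Λ Cov : Matrix V V ℝ} (hunit : IsUnit (1 - Λ)) {ω : V → ℝ}
    (hCov : Cov = ((1 - Λ)ᵀ)⁻¹ * diagonal ω * (1 - Λ)⁻¹) {A : Finset V} {i : V}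
    (hΛ : ∀ m ∉ A, Λ m i = 0) (j : V) :
    Cov j i - ∑ a ∈ A, Cov j a * Λ a i = (1 - Λ)⁻¹ i j * ω i := by
  have hmul : Cov * (1 - Λ) = ((1 - Λ)⁻¹)ᵀ * diagonal ω := by
    rw [hCov, Matrix.mul_assoc, nonsing_inv_mul _ ((isUnit_iff_isUnit_det _).mp hunit),
      Matrix.mul_one, transpose_nonsing_inv]
  rw [← mul_one_sub_apply_eq_sub_sum Cov Λ hΛ, hmul, mul_diagonal, transpose_apply]

theorem posDef_transpose_inv_mul_diagonal_mul_inv {B : Matrix V V ℝ} (hB : IsUnit B)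
    {ω : V → ℝ} (hω : ∀ k, 0 < ω k) :
    ((Bᵀ)⁻¹ * diagonal ω * B⁻¹).PosDef := by
  rw [← transpose_nonsing_inv, ← conjTranspose_eq_transpose_of_trivial]
  exact (PosDef.diagonal hω).conjTranspose_mul_mul_same
    (mulVec_injective_iff_isUnit.mpr (isUnit_nonsing_inv_iff.mpr hB))

theorem condVar_eq_of_regression {Cov : Matrix V V ℝ} {i : V} {A : Finset V}
    (hA : IsUnit (Cov.submatrix (Subtype.val : A → V) Subtype.val).det) (c : A → ℝ)
    (hc : ∀ a : A, ∑ b : A, Cov a b * c b = Cov a i) :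
    condVar Cov i A = Cov i i - ∑ a : A, Cov i a * c a := by
  set S := Cov.submatrix (Subtype.val : A → V) Subtype.val
  have hSc : S *ᵥ c = fun a : A ↦ Cov a i := funext hc
  have hcoef : S⁻¹ *ᵥ (fun a : A ↦ Cov a i) = c := by
    rw [← hSc, mulVec_mulVec, nonsing_inv_mul _ hA, one_mulVec]
  unfold condVar
  congr 1
  refine sum_congr rfl fun a _ ↦ ?_
  rw [← congrFun hcoef a]
  simp only [mulVec, dotProduct, mul_sum, mul_assoc]
  rfl

end LinearSEM

/-- in a linear Gaussian SEM given by a DAG `G`, for any node `i` and any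
set `A` with `pa(i) ⊆ A ⊆ V \ de(i)`, the error variance `ω i` equals the conditional
variance of `X_i` given `X_A`. -/
theorem stmt3 {V : Type*} [Fintype V] [DecidableEq V]
    (E : V → V → Prop) (hacyc : ∀ i, ¬ Relation.TransGen E i i)
    (Λ : Matrix V V ℝ) (hsupp : ∀ i j, ¬ E i j → Λ i j = 0)
    (ω : V → ℝ) (hω : ∀ k, 0 < ω k)
    (Cov : Matrix V V ℝ)
    (hCov : Cov = ((1 - Λ)ᵀ)⁻¹ * Matrix.diagonal ω * (1 - Λ)⁻¹)
    (i : V) (A : Finset V)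
    (hpa : ∀ k, E k i → k ∈ A)
    (hde : ∀ j ∈ A, ¬ Relation.ReflTransGen E i j) :
    ω i = condVar Cov i A := by
  have hunit := isUnit_one_sub_of_acyclic hacyc hsupp
  have hcol := cov_sub_sum_mul_eq_inv_apply_mul hunit hCov
    fun m hm ↦ hsupp m i (mt (hpa m) hm)
  have hPD : (Cov.submatrix (Subtype.val : A → V) Subtype.val).PosDef :=
    hCov ▸ (posDef_transpose_inv_mul_diagonal_mul_inv hunit hω).submatrix Subtype.val_injective
  rw [condVar_eq_of_regression hPD.det_pos.ne'.isUnit (fun b ↦ Λ b i),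
    sum_coe_sort A (fun a ↦ Cov i a * Λ a i), hcol i, inv_one_sub_apply_self hacyc hsupp,
    one_mul]
  intro a
  have hresidual := hcol a
  rw [inv_one_sub_apply_eq_zero hacyc hsupp (hde a a.2), zero_mul, sub_eq_zero] at hresidual
  rw [hresidual, sum_coe_sort A (fun b ↦ Cov a b * Λ b i)]
end

section
/- Let G = (V,E) be a DAG, i ∈ V, and A ⊆ V \ {i}. Suppose there is a node k ∈ pa(i) with k ∉ A. Fix ω ∈ (0,∞)^V. Then there exists Λ ∈ ℝ^E such that the covariance matrix Σ = (I−Λ)^{-T} diag(ω) (I−Λ)^{-1} satisfies ω_i ≠ Σ_{ii} − Σ_{i,A} (Σ_{A,A})^{-1} Σ_{A,i}. (One may take Λ with the single nonzero entry λ_{ki}, in which case Σ_{i,A} = 0 and Σ_{ii} = ω_i + λ_{ki}² ω_k > ω_i.) -/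
open Matrix

/-!
Take `Λ` with the single nonzero entry `λ_{ki} = c`. Then `Λ² = 0`, so `(I - Λ)⁻¹ = I + Λ`, and
row `i` of `Σ = (I + Λ)ᵀ diag(ω) (I + Λ)` is supported on `{i, k}` with `Σ_{ii} = ω_i + c² ω_k`.
As `A` contains neither `i` nor `k`, `Σ_{i,A} = 0`, so the conditional variance is
`Σ_{ii} > ω_i` as soon as `c ≠ 0`.
-/

theorem condVar_eq_of_forall_mem_eq_zero {V : Type*} [Fintype V] [DecidableEq V]
    {Cov : Matrix V V ℝ} {i : V} {A : Finset V} (h : ∀ a ∈ A, Cov i a = 0) :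
    condVar Cov i A = Cov i i := by
  simp [condVar, fun a : A => h a a.2]

theorem Matrix.inv_one_sub_eq_one_add_of_mul_self_eq_zero {n R : Type*} [Fintype n]
    [DecidableEq n] [CommRing R] {N : Matrix n n R} (h : N * N = 0) : (1 - N)⁻¹ = 1 + N :=
  inv_eq_left_inv <| by
    rw [← (Commute.one_left N).mul_self_sub_mul_self_eq, mul_one, h, sub_zero]

section SingleEdge

variable {V R : Type*} [Fintype V] [DecidableEq V] [CommRing R] {k i : V}

theorem inv_one_sub_single (hki : k ≠ i) (c : R) :
    (1 - single k i c)⁻¹ = 1 + single k i c :=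
  inv_one_sub_eq_one_add_of_mul_self_eq_zero (by simp [hki.symm])

theorem inv_transpose_one_sub_single (hki : k ≠ i) (c : R) :
    ((1 - single k i c)ᵀ)⁻¹ = 1 + (single k i c)ᵀ := by
  rw [transpose_sub, transpose_one, transpose_single]
  exact inv_one_sub_eq_one_add_of_mul_self_eq_zero (by simp [hki])

theorem sem_cov_single_apply (hki : k ≠ i) (c : R) (ω : V → R) (a : V) :
    (((1 - single k i c)ᵀ)⁻¹ * diagonal ω * (1 - single k i c)⁻¹ : Matrix V V R) i a =
      (if a = i then ω i + c ^ 2 * ω k else 0) + (if a = k then c * ω k else 0) := by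
  rw [inv_transpose_one_sub_single hki, inv_one_sub_single hki]
  simp only [transpose_single, Matrix.add_mul, one_mul, Matrix.mul_add, mul_one,
    single_mul_mul_single, diagonal_apply_eq, Matrix.add_apply, mul_diagonal, single_apply,
    true_and, ite_mul, zero_mul, diagonal_mul, hki, false_and, diagonal_apply]
  split_ifs <;> subst_vars <;> simp_all
  ring

end SingleEdge

/-- if `A ⊆ V \ {i}` misses a parent `k` of `i`, then for any fixed positive
error variances `ω` there is `Λ ∈ ℝ^E` such that the induced covariance matrix
`Σ = (I-Λ)^{-T} diag(ω) (I-Λ)^{-1}` satisfies `ω i ≠ Σ_{ii} - Σ_{i,A}(Σ_{A,A})⁻¹Σ_{A,i}`. -/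
theorem stmt4 {V : Type*} [Fintype V] [DecidableEq V]
    (E : V → V → Prop) (hacyc : ∀ i, ¬ Relation.TransGen E i i)
    (i k : V) (A : Finset V) (hiA : i ∉ A)
    (hk : E k i) (hkA : k ∉ A)
    (ω : V → ℝ) (hω : ∀ a, 0 < ω a) :
    ∃ Λ : Matrix V V ℝ, (∀ a b, ¬ E a b → Λ a b = 0) ∧
      ω i ≠ condVar (((1 - Λ)ᵀ)⁻¹ * Matrix.diagonal ω * (1 - Λ)⁻¹) i A := by
  have hki : k ≠ i := by
    rintro rfl
    exact hacyc k (.single hk)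
  refine ⟨single k i 1, fun a b hab => single_apply_of_ne _ _ _ _ _ ?_, ?_⟩
  · rintro ⟨rfl, rfl⟩
    exact hab hk
  have hrow : ∀ a ∈ A,
      (((1 - single k i 1)ᵀ)⁻¹ * diagonal ω * (1 - single k i 1)⁻¹ : Matrix V V ℝ) i a = 0 := by
    intro a ha
    rw [sem_cov_single_apply hki, if_neg (ne_of_mem_of_not_mem ha hiA),
      if_neg (ne_of_mem_of_not_mem ha hkA), add_zero]
  rw [condVar_eq_of_forall_mem_eq_zero hrow, sem_cov_single_apply hki, if_pos rfl, if_neg hki.symm]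
  linarith [hω k]
end

section
/- Let G = (V,E) be a DAG and suppose nodes i and j are d-connected given S ⊆ V\{i,j}. Then there exist Λ ∈ ℝ^E and ω ∈ (0,∞)^V with all ω-entries equal (ω_k = 1 for all k) such that the covariance matrix Σ = (I−Λ)^{-T} diag(ω)(I−Λ)^{-1} satisfies det(Σ_{{i}∪S,{j}∪S}) ≠ 0. (In particular, d-separation is complete even under the full equal variance assumption.) -/
/-!
Take `Λ` to be the 0/1 indicator of a set `F` of edges of `G`. Then `I - Λ` is unipotent,
`(I - Λ)⁻¹` is entrywise nonnegative with support the reflexive-transitive closure of `F`, and so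
`Σ u w ≠ 0` exactly when `u` and `w` have a common `F`-ancestor (a trek).

Cutting the d-connecting path at its colliders gives a chain `i = x₀, x₁, …, x_k = j` with
`x₁, …, x_{k-1} ∈ S` and consecutive vertices joined by treks whose edges all start outside `S`.
A chain of minimal length has no trek between `x_r` and `x_c` for `c ≥ r + 2`. Keeping only the
edges into `S` that end on the chain isolates every other vertex of `S`. Then the row of `x_{r-1}`
has its last nonzero entry in the column of `x_r`, and an isolated `s ∈ S` has a single nonzero
entry, in its own column: the submatrix is triangular up to permutations, with nonzero pivots.
-/

/-- `i` and `j` are d-connected given `S` in the directed graph `E`: there is a path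
`v 0 = i, …, v n = j` whose consecutive vertices are adjacent (in either direction),
such that every interior collider lies in `S` and every interior non-collider lies
outside `S`. -/
def DConnected {V : Type*} (E : V → V → Prop) (S : Finset V) (i j : V) : Prop :=
  ∃ (n : ℕ) (v : ℕ → V), 0 < n ∧ v 0 = i ∧ v n = j ∧
    (∀ t < n, E (v t) (v (t + 1)) ∨ E (v (t + 1)) (v t)) ∧
    (∀ t, 0 < t → t < n →
      ((E (v (t - 1)) (v t) ∧ E (v (t + 1)) (v t)) → v t ∈ S) ∧
      (¬(E (v (t - 1)) (v t) ∧ E (v (t + 1)) (v t)) → v t ∉ S))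

open Matrix Relation Finset

def Trek {V : Type*} (R : V → V → Prop) (u w : V) : Prop :=
  ∃ t, ReflTransGen R t u ∧ ReflTransGen R t w

section TrekChain

variable {V : Type*} {R : V → V → Prop} {S : Set V} {i u w : V}

lemma Trek.symm (h : Trek R u w) : Trek R w u :=
  let ⟨t, hu, hw⟩ := h; ⟨t, hw, hu⟩

lemma Trek.tail {w' : V} (h : Trek R u w) (hw : R w w') : Trek R u w' :=
  let ⟨t, hu, htw⟩ := h; ⟨t, hu, htw.tail hw⟩

lemma Trek.mono {R' : V → V → Prop} (hRR' : R ≤ R') (h : Trek R u w) :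
    Trek R' u w :=
  let ⟨t, hu, hw⟩ := h; ⟨t, ReflTransGen.mono hRR' _ _ hu, ReflTransGen.mono hRR' _ _ hw⟩

/-- No `R`-edge leaves `S`, so a vertex of `S` can only end an `R`-path. -/
lemma Trek.restrict {P : V → Prop} (hR : ∀ a b, R a b → a ∉ S) (h : Trek R u w)
    (hu : u ∈ S → P u) (hw : w ∈ S → P w) : Trek (fun a b => R a b ∧ (b ∈ S → P b)) u w := by
  have key : ∀ {t z}, ReflTransGen R t z → (z ∈ S → P z) →
      ReflTransGen (fun a b => R a b ∧ (b ∈ S → P b)) t z := by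
    intro t z htz hz
    induction htz with
    | refl => exact .refl
    | tail _ hbc ih => exact (ih fun hb => absurd hb (hR _ _ hbc)).tail ⟨hbc, hz⟩
  obtain ⟨t, htu, htw⟩ := h
  exact ⟨t, key htu hu, key htw hw⟩

lemma Trek.eq_of_isolated (hin : ∀ a, ¬ R a u) (hout : ∀ b, ¬ R u b) (h : Trek R u w) :
    w = u := by
  obtain ⟨t, htu, htw⟩ := h
  obtain rfl : u = t := htu.cases_tail.resolve_right fun ⟨a, _, hau⟩ => hin a hau
  exact (htw.cases_head.resolve_right fun ⟨b, hub, _⟩ => hout b hub).symm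

variable (R) in
/-- The endpoint `i` followed by the colliders of a d-connecting path. -/
def IsTrekChain (S : Set V) (i : V) (k : ℕ) (x : ℕ → V) : Prop :=
  x 0 = i ∧ (∀ ℓ, 0 < ℓ → ℓ < k → x ℓ ∈ S) ∧ ∀ ℓ < k, Trek R (x ℓ) (x (ℓ + 1))

lemma IsTrekChain.snoc {k : ℕ} {x : ℕ → V} (hx : IsTrekChain R S i k x)
    (hk : 0 < k → x k ∈ S) (hw : Trek R (x k) w) :
    IsTrekChain R S i (k + 1) (Function.update x (k + 1) w) := by
  obtain ⟨hx0, hxS, hxR⟩ := hx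
  refine ⟨by simpa using hx0, fun ℓ hℓ hℓk => ?_, fun ℓ hℓk => ?_⟩
  · rw [Function.update_of_ne (by omega)]
    rcases (Nat.lt_succ_iff.mp hℓk).lt_or_eq with hlt | rfl
    exacts [hxS ℓ hℓ hlt, hk hℓ]
  · rw [Function.update_of_ne (by omega)]
    rcases (Nat.lt_succ_iff.mp hℓk).lt_or_eq with hlt | rfl
    · rw [Function.update_of_ne (by omega)]
      exact hxR ℓ hlt
    · simpa using hw

lemma IsTrekChain.shortcut {k r d : ℕ} {x : ℕ → V} (hx : IsTrekChain R S i k x)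
    (hk : r + d < k) (ht : Trek R (x r) (x (r + d + 1))) :
    IsTrekChain R S i (k - d) (fun ℓ => x (if ℓ ≤ r then ℓ else ℓ + d)) := by
  obtain ⟨hx0, hxS, hxR⟩ := hx
  refine ⟨by simpa using hx0, fun ℓ hℓ hℓk => hxS _ (by split_ifs <;> omega)
    (by split_ifs <;> omega), fun ℓ hℓk => ?_⟩
  rcases lt_trichotomy ℓ r with hlt | rfl | hgt
  · simpa [hlt.le, Nat.succ_le_of_lt hlt] using hxR ℓ (by omega)
  · simpa [show ℓ + 1 + d = ℓ + d + 1 by omega] using ht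
  · simpa [show ¬ ℓ ≤ r by omega, show ¬ ℓ + 1 ≤ r by omega, show ℓ + 1 + d = ℓ + d + 1 by omega]
      using hxR (ℓ + d) (by omega)

lemma IsTrekChain.restrict {k : ℕ} {x : ℕ → V} (hR : ∀ a b, R a b → a ∉ S) (hiS : i ∉ S)
    (hx : IsTrekChain R S i k x) :
    IsTrekChain (fun a b => R a b ∧ (b ∈ S → ∃ c, 0 < c ∧ c ≤ k ∧ x c = b)) S i k x := by
  obtain ⟨hx0, hxS, hxR⟩ := hx
  have hon : ∀ ℓ ≤ k, x ℓ ∈ S → ∃ c, 0 < c ∧ c ≤ k ∧ x c = x ℓ := fun ℓ hℓ hS =>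
    ⟨ℓ, Nat.pos_of_ne_zero fun h => hiS (hx0 ▸ h ▸ hS), hℓ, rfl⟩
  exact ⟨hx0, hxS, fun ℓ hℓ => (hxR ℓ hℓ).restrict hR (hon ℓ hℓ.le) (hon (ℓ + 1) hℓ)⟩

/-- Scan the walk, keeping the invariant that the segment since the last chain vertex `x k`
either descends to `x k` or is a trek from `x k` ending with a forward edge; a backward edge in
the second case marks a collider, which becomes the next chain vertex. -/
lemma exists_trekChain_of_walk {n : ℕ} {v : ℕ → V}
    (hedge : ∀ t < n, R (v t) (v (t + 1)) ∨ R (v (t + 1)) (v t))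
    (hcoll : ∀ t, 0 < t → t < n → R (v (t - 1)) (v t) → R (v (t + 1)) (v t) → v t ∈ S) :
    ∃ k x, IsTrekChain R S (v 0) k x ∧ x k = v n := by
  have key : ∀ q ≤ n, ∃ k x, IsTrekChain R S (v 0) k x ∧ (0 < k → x k ∈ S) ∧
      (ReflTransGen R (v q) (x k) ∨ (0 < q ∧ R (v (q - 1)) (v q) ∧ Trek R (x k) (v q))) := by
    intro q hq
    induction q with
    | zero => exact ⟨0, fun _ => v 0, ⟨rfl, by omega, by omega⟩, by omega, .inl .refl⟩
    | succ q ih =>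
      obtain ⟨k, x, hx, hk, hmode⟩ := ih (by omega)
      rcases hedge q (by omega) with hfwd | hbwd
      · refine ⟨k, x, hx, hk, .inr ⟨q.succ_pos, hfwd, ?_⟩⟩
        rcases hmode with hdesc | ⟨-, -, ht⟩
        exacts [⟨v q, hdesc, .single hfwd⟩, ht.tail hfwd]
      · rcases hmode with hdesc | ⟨hq0, hin, ht⟩
        · exact ⟨k, x, hx, hk, .inl (.head hbwd hdesc)⟩
        · refine ⟨k + 1, _, hx.snoc hk ht, fun _ => ?_, .inl ?_⟩ <;>
            rw [Function.update_self]
          exacts [hcoll q hq0 (by omega) hin hbwd, .single hbwd]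
  obtain ⟨k, x, hx, hk, hmode⟩ := key n le_rfl
  have ht : Trek R (x k) (v n) := by
    rcases hmode with hdesc | ⟨-, -, ht⟩
    exacts [⟨v n, hdesc, .refl⟩, ht]
  exact ⟨k + 1, _, hx.snoc hk ht, Function.update_self ..⟩

lemma exists_trekChain_forall_not_trek {j : V}
    (h : ∃ k x, IsTrekChain R S i k x ∧ x k = j) :
    ∃ k x, IsTrekChain R S i k x ∧ x k = j ∧
      ∀ r c, r + 2 ≤ c → c ≤ k → ¬ Trek R (x r) (x c) := by
  classical
  obtain ⟨x, hx, hxk⟩ := Nat.find_spec h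
  refine ⟨Nat.find h, x, hx, hxk, fun r c hrc hck ht => ?_⟩
  set k := Nat.find h
  have hshort := hx.shortcut (d := c - r - 1) (show r + (c - r - 1) < k by omega)
    (by rwa [show r + (c - r - 1) + 1 = c by omega])
  refine Nat.find_min h (m := k - (c - r - 1)) (by omega) ⟨_, hshort, ?_⟩
  simpa [show ¬ k - (c - r - 1) ≤ r by omega, show k - (c - r - 1) + (c - r - 1) = k by omega]
    using hxk

end TrekChain

section RelMatrix

variable {V : Type*} (α : Type*) (R : V → V → Prop) [DecidableRel R]

def relMatrix [Zero α] [One α] : Matrix V V α := of fun a b => if R a b then 1 else 0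

variable {α R}

lemma relMatrix_apply [Zero α] [One α] (a b : V) :
    relMatrix α R a b = if R a b then 1 else 0 := rfl

variable [CommRing α] [LinearOrder α] [IsStrictOrderedRing α]

lemma relMatrix_apply_nonneg (a b : V) : 0 ≤ relMatrix α R a b := by
  rw [relMatrix_apply]; split_ifs <;> simp

variable [Fintype V] [DecidableEq V]

lemma relMatrix_pow_apply_nonneg (m : ℕ) (a b : V) : 0 ≤ (relMatrix α R ^ m) a b := by
  induction m generalizing a with
  | zero => rw [pow_zero, one_apply]; split_ifs <;> simp
  | succ m ih =>
    rw [pow_succ', mul_apply]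
    exact sum_nonneg fun c _ => mul_nonneg (relMatrix_apply_nonneg a c) (ih c)

lemma exists_rel_of_relMatrix_pow_succ_apply_ne_zero {m : ℕ} {a b : V}
    (h : (relMatrix α R ^ (m + 1)) a b ≠ 0) : ∃ c, R a c ∧ (relMatrix α R ^ m) c b ≠ 0 := by
  rw [pow_succ', mul_apply] at h
  obtain ⟨c, -, hc⟩ := exists_ne_zero_of_sum_ne_zero h
  obtain ⟨hac, hcb⟩ := mul_ne_zero_iff.mp hc
  refine ⟨c, ?_, hcb⟩
  by_contra hR
  simp [relMatrix_apply, hR] at hac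

lemma reflTransGen_of_relMatrix_pow_apply_ne_zero {m : ℕ} {a b : V}
    (h : (relMatrix α R ^ m) a b ≠ 0) : ReflTransGen R a b := by
  induction m generalizing a with
  | zero =>
    obtain rfl : a = b := by by_contra hab; simp [one_apply_ne hab] at h
    exact .refl
  | succ m ih =>
    obtain ⟨c, hac, hcb⟩ := exists_rel_of_relMatrix_pow_succ_apply_ne_zero h
    exact .head hac (ih hcb)

open Classical in
/-- Along the `R`-path behind a nonzero entry of `A ^ m`, the set of strict descendants shrinks
at every step. -/
lemma le_card_descendants_of_relMatrix_pow_apply_ne_zero (hR : ∀ a, ¬ TransGen R a a)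
    {m : ℕ} {a b : V} (h : (relMatrix α R ^ m) a b ≠ 0) : m ≤ #{c | TransGen R a c} := by
  induction m generalizing a with
  | zero => exact Nat.zero_le _
  | succ m ih =>
    obtain ⟨c, hac, hcb⟩ := exists_rel_of_relMatrix_pow_succ_apply_ne_zero h
    refine (ih hcb).trans_lt (card_lt_card ?_)
    refine (ssubset_iff_of_subset fun d hd => ?_).mpr ⟨c, ?_, ?_⟩
    · simp only [mem_filter, mem_univ, true_and] at hd ⊢
      exact .head hac hd
    · simpa using TransGen.single hac
    · simpa using hR c

lemma relMatrix_pow_card_eq_zero (hR : ∀ a, ¬ TransGen R a a) :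
    relMatrix α R ^ Fintype.card V = 0 := by
  classical
  ext a b
  by_contra h
  have hle := le_card_descendants_of_relMatrix_pow_apply_ne_zero hR h
  have hlt : #{c | TransGen R a c} < Fintype.card V :=
    card_lt_univ_of_notMem (x := a) (by simpa using hR a)
  exact hle.not_gt hlt

lemma geom_sum_relMatrix_mul_one_sub (hR : ∀ a, ¬ TransGen R a a) :
    (∑ m ∈ range (Fintype.card V), relMatrix α R ^ m) * (1 - relMatrix α R) = 1 := by
  rw [geom_sum_mul_neg, relMatrix_pow_card_eq_zero hR, sub_zero]

lemma inv_one_sub_relMatrix (hR : ∀ a, ¬ TransGen R a a) :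
    (1 - relMatrix α R)⁻¹ = ∑ m ∈ range (Fintype.card V), relMatrix α R ^ m :=
  inv_eq_left_inv (geom_sum_relMatrix_mul_one_sub hR)

lemma inv_one_sub_relMatrix_apply_nonneg (hR : ∀ a, ¬ TransGen R a a) (a b : V) :
    0 ≤ (1 - relMatrix α R)⁻¹ a b := by
  rw [inv_one_sub_relMatrix hR, Matrix.sum_apply]
  exact sum_nonneg fun m _ => relMatrix_pow_apply_nonneg m a b

lemma inv_one_sub_relMatrix_apply_pos (hR : ∀ a, ¬ TransGen R a a) {a b : V}
    (hab : ReflTransGen R a b) : 0 < (1 - relMatrix α R)⁻¹ a b := by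
  have hN1 : (1 - relMatrix α R)⁻¹ * (1 - relMatrix α R) = 1 := by
    rw [inv_one_sub_relMatrix hR, geom_sum_relMatrix_mul_one_sub hR]
  set N := (1 - relMatrix α R)⁻¹
  -- `N = 1 + N * A` with `N, A ≥ 0`, so `N a a ≥ 1` and `N a c ≥ N a b` whenever `R b c`.
  have hN : ∀ c, N a c = (1 : Matrix V V α) a c + ∑ d, N a d * relMatrix α R d c := fun c => by
    rw [← mul_apply, ← Matrix.add_apply, ← hN1, mul_sub, mul_one, sub_add_cancel]
  have hN_nonneg : ∀ d c, 0 ≤ N a d * relMatrix α R d c := fun d c =>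
    mul_nonneg (inv_one_sub_relMatrix_apply_nonneg hR a d) (relMatrix_apply_nonneg d c)
  induction hab with
  | refl =>
    rw [hN, one_apply_eq]
    exact add_pos_of_pos_of_nonneg one_pos (sum_nonneg fun d _ => hN_nonneg d a)
  | @tail b c _ hbc ih =>
    calc 0 < N a b * relMatrix α R b c := by simpa [relMatrix_apply, hbc] using ih
      _ ≤ ∑ d, N a d * relMatrix α R d c :=
        single_le_sum (f := fun d => N a d * relMatrix α R d c) (fun d _ => hN_nonneg d c)
          (mem_univ b)
      _ ≤ N a c := by
        rw [hN c]
        refine le_add_of_nonneg_left ?_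
        rw [one_apply]; split_ifs <;> simp

lemma inv_one_sub_relMatrix_apply_ne_zero_iff (hR : ∀ a, ¬ TransGen R a a) {a b : V} :
    (1 - relMatrix α R)⁻¹ a b ≠ 0 ↔ ReflTransGen R a b := by
  refine ⟨fun h => ?_, fun h => (inv_one_sub_relMatrix_apply_pos hR h).ne'⟩
  rw [inv_one_sub_relMatrix hR, Matrix.sum_apply] at h
  obtain ⟨m, -, hm⟩ := exists_ne_zero_of_sum_ne_zero h
  exact reflTransGen_of_relMatrix_pow_apply_ne_zero hm

lemma covariance_apply_ne_zero_iff (hR : ∀ a, ¬ TransGen R a a) {ω : V → α}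
    (hω : ∀ k, 0 < ω k) (u w : V) :
    (((1 - relMatrix α R)ᵀ)⁻¹ * diagonal ω * (1 - relMatrix α R)⁻¹ : Matrix V V α) u w ≠ 0 ↔
      Trek R u w := by
  rw [← transpose_nonsing_inv, mul_apply]
  simp only [mul_diagonal, transpose_apply]
  rw [Ne, sum_eq_zero_iff_of_nonneg fun c _ => mul_nonneg (mul_nonneg
    (inv_one_sub_relMatrix_apply_nonneg hR c u) (hω c).le)
    (inv_one_sub_relMatrix_apply_nonneg hR c w)]
  simp only [mem_univ, true_implies, not_forall, mul_ne_zero_iff, (hω _).ne', ne_eq,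
    not_false_eq_true, and_true, inv_one_sub_relMatrix_apply_ne_zero_iff hR, Trek]

end RelMatrix

theorem Matrix.det_ne_zero_of_exists_pivot {ι R : Type*} [Fintype ι] [DecidableEq ι] [CommRing R]
    [IsDomain R] (M : Matrix ι ι R) (h : ι → ℕ)
    (hpiv : ∀ b, ∃ a, M a b ≠ 0 ∧ ∀ b', M a b' ≠ 0 → b' = b ∨ h b' < h b) : M.det ≠ 0 := by
  intro hdet
  obtain ⟨g, hg, hMg⟩ := exists_mulVec_eq_zero_iff.mpr hdet
  suffices ∀ n b, h b = n → g b = 0 from hg (funext fun b => this _ b rfl)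
  intro n
  induction n using Nat.strong_induction_on with
  | _ n ih =>
    rintro b rfl
    obtain ⟨a, hab, ha⟩ := hpiv b
    have hrow : ∑ b', M a b' * g b' = 0 := congrFun hMg a
    rw [sum_eq_single b (fun b' _ hb' => ?_) (by simp)] at hrow
    · exact (mul_eq_zero.mp hrow).resolve_left hab
    · by_cases hM : M a b' = 0
      · rw [hM, zero_mul]
      · rw [ih (h b') ((ha b' hM).resolve_left hb') b' rfl, mul_zero]

section DSeparation

variable {V : Type*}

lemma Option.elim_coe_injective {S : Finset V} {j : V} (hjS : j ∉ S) :
    Function.Injective fun b : Option S => b.elim j (↑) := by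
  rintro (_ | ⟨s, hs⟩) (_ | ⟨s', hs'⟩) h
  · rfl
  · exact absurd ((show j = s' from h) ▸ hs') hjS
  · exact absurd ((show s = j from h) ▸ hs) hjS
  · exact congrArg some (Subtype.ext h)

lemma Option.exists_elim_coe_eq {S : Finset V} {i u : V} (hu : u = i ∨ u ∈ S) :
    ∃ a : Option S, a.elim i (↑) = u := by
  rcases hu with rfl | hu
  exacts [⟨none, rfl⟩, ⟨some ⟨u, hu⟩, rfl⟩]

lemma Option.elim_coe_eq_or_mem {S : Finset V} (j : V) (b : Option S) :
    b.elim j (↑) = j ∨ b.elim j (↑) ∈ S := by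
  rcases b with _ | ⟨s, hs⟩
  exacts [.inl rfl, .inr hs]

lemma exists_trekChain_of_dConnected {E : V → V → Prop} {S : Finset V} {i j : V}
    (hasymm : ∀ a b, E a b → ¬ E b a) (hiS : i ∉ S) (hjS : j ∉ S) (h : DConnected E S i j) :
    ∃ k x, IsTrekChain (fun a b => E a b ∧ a ∉ S) S i k x ∧ x k = j := by
  obtain ⟨n, v, -, rfl, rfl, hedge, hcol⟩ := h
  have hcoll : ∀ t, 0 < t → t < n → v t ∈ S → E (v (t - 1)) (v t) ∧ E (v (t + 1)) (v t) :=
    fun t h0 hn hS => not_not.mp fun hnc => (hcol t h0 hn).2 hnc hS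
  refine exists_trekChain_of_walk (fun t ht => ?_)
    fun t h0 hn h1 h2 => (hcol t h0 hn).1 ⟨h1.1, h2.1⟩
  rcases hedge t ht with hfwd | hbwd
  · refine .inl ⟨hfwd, fun hS => ?_⟩
    rcases Nat.eq_zero_or_pos t with rfl | h0
    exacts [hiS hS, hasymm _ _ hfwd (hcoll t h0 ht hS).2]
  · refine .inr ⟨hbwd, fun hS => ?_⟩
    rcases (Nat.succ_le_of_lt ht).eq_or_lt with heq | hlt
    · exact hjS (heq ▸ hS)
    · exact hasymm _ _ hbwd (by simpa using (hcoll (t + 1) t.succ_pos hlt hS).1)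

variable {R : V → V → Prop} {S : Set V} {i j : V} {k : ℕ} {x : ℕ → V} in
/-- The pivot of a column `w` on the chain is the row of the chain vertex preceding the last
occurrence of `w`; an off-chain vertex of `S` is its own pivot. -/
lemma exists_trek_pivot [DecidableEq V] (hx : IsTrekChain R S i k x) (hxk : x k = j)
    (hk : 0 < k) (hiS : i ∉ S) (hfar : ∀ r c, r + 2 ≤ c → c ≤ k → ¬ Trek R (x r) (x c))
    (hiso : ∀ s ∈ S, (¬ ∃ c, 0 < c ∧ c ≤ k ∧ x c = s) → ∀ w, Trek R s w → w = s)
    {w : V} (hw : w = j ∨ w ∈ S) :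
    ∃ u, (u = i ∨ u ∈ S) ∧ Trek R u w ∧ ∀ w', (w' = j ∨ w' ∈ S) → Trek R u w' →
      w' = w ∨ Nat.findGreatest (x · = w') k < Nat.findGreatest (x · = w) k := by
  obtain ⟨hx0, hxS, hxR⟩ := hx
  by_cases hon : ∃ c, 0 < c ∧ c ≤ k ∧ x c = w
  · obtain ⟨c, hc0, hck, hxc⟩ := hon
    set r := Nat.findGreatest (x · = w) k
    have hcr : c ≤ r := Nat.le_findGreatest hck hxc
    have hrk : r ≤ k := Nat.findGreatest_le k
    have hxr : x r = w := Nat.findGreatest_spec (P := (x · = w)) hck hxc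
    refine ⟨x (r - 1), ?_, by simpa [show r - 1 + 1 = r by omega, hxr] using hxR (r - 1) (by omega),
      fun w' hw' ht => ?_⟩
    · rcases Nat.eq_zero_or_pos (r - 1) with h | h
      exacts [.inl (h ▸ hx0), .inr (hxS _ h (by omega))]
    by_cases hon' : ∃ c', 0 < c' ∧ c' ≤ k ∧ x c' = w'
    · obtain ⟨c', hc'0, hc'k, hxc'⟩ := hon'
      set r' := Nat.findGreatest (x · = w') k
      have hxr' : x r' = w' := Nat.findGreatest_spec (P := (x · = w')) hc'k hxc'
      rcases lt_trichotomy r' r with hlt | heq | hgt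
      · exact .inr hlt
      · exact .inl (hxr'.symm.trans (heq ▸ hxr))
      · exact absurd (hxr' ▸ ht) (hfar (r - 1) r' (by omega) (Nat.findGreatest_le k))
    · have hw'S : w' ∈ S := hw'.resolve_left fun h => hon' ⟨k, hk, le_rfl, hxk.trans h.symm⟩
      have hu : x (r - 1) = w' := hiso w' hw'S hon' _ ht.symm
      rcases Nat.eq_zero_or_pos (r - 1) with h | h
      · exact absurd (hx0 ▸ h ▸ hu ▸ hw'S) hiS
      · exact absurd ⟨r - 1, h, by omega, hu⟩ hon'
  · have hwS : w ∈ S := hw.resolve_left fun h => hon ⟨k, hk, le_rfl, hxk.trans h.symm⟩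
    exact ⟨w, .inr hwS, ⟨w, .refl, .refl⟩, fun w' _ ht => .inl (hiso w hwS hon w' ht)⟩

end DSeparation

/-- if `i` and `j` are d-connected given `S` in a DAG `G`, then there are
`Λ ∈ ℝ^E` and error variances all equal to `1` such that the induced covariance matrix
`Σ = (I-Λ)^{-T} diag(ω) (I-Λ)^{-1}` has `det Σ_{{i}∪S, {j}∪S} ≠ 0`; i.e., d-separation is
complete even under the full equal variance assumption.  (Rows `{i}∪S` and columns
`{j}∪S` are indexed by `Option S`, `none` standing for `i`, resp. `j`.) -/
theorem stmt10 {V : Type*} [Fintype V] [DecidableEq V]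
    (E : V → V → Prop) (hacyc : ∀ i, ¬ Relation.TransGen E i i)
    (S : Finset V) (i j : V) (hij : i ≠ j) (hiS : i ∉ S) (hjS : j ∉ S)
    (hconn : DConnected E S i j) :
    ∃ (Λ : Matrix V V ℝ) (ω : V → ℝ),
      (∀ a b, ¬ E a b → Λ a b = 0) ∧ (∀ k, ω k = 1) ∧
      Matrix.det (Matrix.of fun a b : Option S =>
        (((1 - Λ)ᵀ)⁻¹ * Matrix.diagonal ω * (1 - Λ)⁻¹ : Matrix V V ℝ)
          (a.elim i (fun s => (s : V))) (b.elim j (fun s => (s : V)))) ≠ 0 := by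
  classical
  have hasymm : ∀ a b, E a b → ¬ E b a := fun a b hab hba => hacyc a (.tail (.single hab) hba)
  obtain ⟨k, x, hx, hxk, hfar⟩ :=
    exists_trekChain_forall_not_trek (exists_trekChain_of_dConnected hasymm hiS hjS hconn)
  have hk : 0 < k := Nat.pos_of_ne_zero fun h => hij (hx.1.symm.trans (h ▸ hxk))
  set F : V → V → Prop := fun a b => (E a b ∧ a ∉ S) ∧ (b ∈ S → ∃ c, 0 < c ∧ c ≤ k ∧ x c = b)
  have hFE : F ≤ E := fun _ _ h => h.1.1
  have hFacyc : ∀ a, ¬ TransGen F a a := fun a h => hacyc a (TransGen.mono hFE _ _ h)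
  have hiso : ∀ s ∈ S, (¬ ∃ c, 0 < c ∧ c ≤ k ∧ x c = s) → ∀ w, Trek F s w → w = s :=
    fun s hs hon _ => Trek.eq_of_isolated (fun _ h => hon (h.2 hs)) (fun _ h => h.1.2 hs)
  refine ⟨relMatrix ℝ F, fun _ => 1, fun a b hab => by simp [relMatrix_apply, F, hab],
    fun _ => rfl, ?_⟩
  refine det_ne_zero_of_exists_pivot _ (fun b => Nat.findGreatest (x · = b.elim j (↑)) k)
    fun b => ?_
  obtain ⟨u, hu, hub, hpiv⟩ := exists_trek_pivot (hx.restrict (fun _ _ h => h.2) hiS) hxk hk hiS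
    (fun r c hrc hck ht => hfar r c hrc hck (ht.mono fun _ _ h => h.1)) hiso
    (Option.elim_coe_eq_or_mem j b)
  obtain ⟨a, rfl⟩ := Option.exists_elim_coe_eq hu
  simp only [of_apply, covariance_apply_ne_zero_iff hFacyc fun _ => one_pos]
  exact ⟨a, hub, fun b' hb' => (hpiv _ (Option.elim_coe_eq_or_mem j b') hb').imp_left
    fun h => Option.elim_coe_injective hjS h⟩
end

section
/- Let G₁ = (V,E₁) and G₂ = (V,E₂) be DAGs and Π a partition of V. If (i) G₁ and G₂ are Markov equivalent (equivalently, M_{G₁} = M_{G₂}), and (ii) pa_{G₁}(i) = pa_{G₂}(i) for every node i lying in a block of Π of size at least 2, then M_{G₁,Π} = M_{G₂,Π}. -/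
open Matrix

/-- The partially homoscedastic linear Gaussian model `M_{G,Π}`: covariance matrices
`(I-Λ)^{-T} diag(ω) (I-Λ)^{-1}` with `Λ` supported on the edges `E` and `ω` positive,
with `ω a = ω b` whenever `r a b` (i.e. `a, b` in the same block of the partition).
Taking `r` to be equality gives the ordinary model `M_G` with arbitrary variances. -/
def PHModel {V : Type*} [Fintype V] [DecidableEq V]
    (E : V → V → Prop) (r : V → V → Prop) : Set (Matrix V V ℝ) :=
  {C | ∃ (Λ : Matrix V V ℝ) (ω : V → ℝ),
    (∀ a b, ¬ E a b → Λ a b = 0) ∧ (∀ a, 0 < ω a) ∧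
    (∀ a b, r a b → ω a = ω b) ∧
    C = ((1 - Λ)ᵀ)⁻¹ * Matrix.diagonal ω * (1 - Λ)⁻¹}

namespace Stmt12Aux

variable {V : Type*} [Fintype V] [DecidableEq V]

lemma pow_chain (E : V → V → Prop) (Λ : Matrix V V ℝ)
    (hE : ∀ a b, ¬ E a b → Λ a b = 0) :
    ∀ (m : ℕ) (a b : V), (Λ ^ m) a b ≠ 0 →
      ∃ f : ℕ → V, f 0 = a ∧ f m = b ∧ ∀ i < m, E (f i) (f (i + 1)) := by
  intro m
  induction m with
  | zero =>
    intro a b h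
    rw [pow_zero] at h
    have hab : a = b := by
      by_contra hab
      exact h (Matrix.one_apply_ne hab)
    exact ⟨fun _ => a, rfl, hab ▸ rfl, fun i hi => absurd hi (Nat.not_lt_zero i)⟩
  | succ m ih =>
    intro a b h
    rw [pow_succ', Matrix.mul_apply] at h
    obtain ⟨c, _, hc⟩ := Finset.exists_ne_zero_of_sum_ne_zero h
    have h1 : Λ a c ≠ 0 := fun h0 => hc (by rw [h0, zero_mul])
    have h2 : (Λ ^ m) c b ≠ 0 := fun h0 => hc (by rw [h0, mul_zero])
    have hac : E a c := by by_contra hn; exact h1 (hE a c hn)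
    obtain ⟨f, hf0, hfm, hf⟩ := ih c b h2
    refine ⟨fun n => if n = 0 then a else f (n - 1), by simp, by simp [hfm], ?_⟩
    intro i hi
    rcases Nat.eq_zero_or_pos i with rfl | hpos
    · simpa [hf0] using hac
    · have h3 : ¬ (i = 0) := by omega
      have h4 : ¬ (i + 1 = 0) := by omega
      simp only [h3, h4, if_false]
      have e1 : i + 1 - 1 = i - 1 + 1 := by omega
      rw [e1]
      exact hf (i - 1) (by omega)

lemma chain_tg (E : V → V → Prop) (m : ℕ) (f : ℕ → V)
    (hf : ∀ i < m, E (f i) (f (i + 1))) :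
    ∀ j, j ≤ m → ∀ i, i < j → Relation.TransGen E (f i) (f j) := by
  intro j
  induction j with
  | zero => intro _ i hi; omega
  | succ j ih =>
    intro hj i hi
    have hstep : E (f j) (f (j + 1)) := hf j (by omega)
    rcases Nat.lt_or_ge i j with h | h
    · exact (ih (by omega) i h).tail hstep
    · have : i = j := by omega
      subst this
      exact Relation.TransGen.single hstep

lemma nilpotent (E : V → V → Prop) (Λ : Matrix V V ℝ)
    (hE : ∀ a b, ¬ E a b → Λ a b = 0)
    (hacyc : ∀ i, ¬ Relation.TransGen E i i) :
    Λ ^ (Fintype.card V) = 0 := by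
  ext a b
  simp only [Matrix.zero_apply]
  by_contra h
  obtain ⟨f, hf0, hfm, hf⟩ := pow_chain E Λ hE _ a b h
  set N := Fintype.card V with hN
  have hmaps : ∀ x ∈ Finset.range (N + 1), f x ∈ (Finset.univ : Finset V) :=
    fun x _ => Finset.mem_univ _
  have hcard : (Finset.univ : Finset V).card < (Finset.range (N + 1)).card := by
    simp [hN]
  obtain ⟨i, hi, j, hj, hij, hfij⟩ :=
    Finset.exists_ne_map_eq_of_card_lt_of_maps_to hcard hmaps
  simp only [Finset.mem_range] at hi hj
  rcases hij.lt_or_gt with hlt | hlt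
  · have := chain_tg E N f hf j (by omega) i hlt
    rw [← hfij] at this
    exact hacyc _ this
  · have := chain_tg E N f hf i (by omega) j hlt
    rw [hfij] at this
    exact hacyc _ this

section

variable (E : V → V → Prop) (Λ : Matrix V V ℝ)
  (hE : ∀ a b, ¬ E a b → Λ a b = 0)
  (hacyc : ∀ i, ¬ Relation.TransGen E i i)

include hE hacyc

lemma isUnit_A : IsUnit (1 - Λ) :=
  IsNilpotent.isUnit_one_sub ⟨Fintype.card V, nilpotent E Λ hE hacyc⟩

lemma isUnit_det_A : IsUnit (1 - Λ).det :=
  (Matrix.isUnit_iff_isUnit_det _).mp (isUnit_A E Λ hE hacyc)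

lemma inv_A_eq : (1 - Λ)⁻¹ = ∑ m ∈ Finset.range (Fintype.card V), Λ ^ m := by
  refine Matrix.inv_eq_right_inv ?_
  have h := mul_geom_sum Λ (Fintype.card V)
  rw [nilpotent E Λ hE hacyc] at h
  calc (1 - Λ) * ∑ m ∈ Finset.range (Fintype.card V), Λ ^ m
      = -((Λ - 1) * ∑ m ∈ Finset.range (Fintype.card V), Λ ^ m) := by
        rw [← neg_mul, neg_sub]
    _ = 1 := by rw [h]; simp

lemma inv_A_diag (i : V) : (1 - Λ)⁻¹ i i = 1 := by
  rw [inv_A_eq E Λ hE hacyc, Matrix.sum_apply]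
  rw [Finset.sum_eq_single 0]
  · simp
  · intro m _ hm
    by_contra h
    obtain ⟨f, hf0, hfm, hf⟩ := pow_chain E Λ hE m i i h
    have := chain_tg E m f hf m le_rfl 0 (Nat.pos_of_ne_zero hm)
    rw [hf0, hfm] at this
    exact hacyc i this
  · intro h
    have : (0 : ℕ) < Fintype.card V := Fintype.card_pos_iff.mpr ⟨i⟩
    simp [this] at h

lemma inv_A_parent (i k : V) (hk : E k i) : (1 - Λ)⁻¹ i k = 0 := by
  have hik : i ≠ k := by
    rintro rfl
    exact hacyc i (Relation.TransGen.single hk)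
  rw [inv_A_eq E Λ hE hacyc, Matrix.sum_apply]
  refine Finset.sum_eq_zero fun m _ => ?_
  by_contra h
  obtain ⟨f, hf0, hfm, hf⟩ := pow_chain E Λ hE m i k h
  rcases Nat.eq_zero_or_pos m with rfl | hm
  · exact hik (hf0 ▸ hfm ▸ rfl)
  · have := chain_tg E m f hf m le_rfl 0 hm
    rw [hf0, hfm] at this
    exact hacyc i (this.tail hk)

end

/-- Key computation: the column transform of `Σ` recovers `ω i` and annihilates parents. -/
lemma sigma_col (E : V → V → Prop) (Λ : Matrix V V ℝ) (ω : V → ℝ)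
    (hE : ∀ a b, ¬ E a b → Λ a b = 0)
    (hacyc : ∀ i, ¬ Relation.TransGen E i i) (i : V) :
    ((((1 - Λ)ᵀ)⁻¹ * Matrix.diagonal ω * (1 - Λ)⁻¹) *ᵥ (fun k => (1 - Λ) k i)) i = ω i ∧
    ∀ k, E k i → ((((1 - Λ)ᵀ)⁻¹ * Matrix.diagonal ω * (1 - Λ)⁻¹) *ᵥ (fun k => (1 - Λ) k i)) k
      = 0 := by
  set A := 1 - Λ with hA
  have hdet : IsUnit A.det := isUnit_det_A E Λ hE hacyc
  have hmul : ((Aᵀ)⁻¹ * Matrix.diagonal ω * A⁻¹) * A = (Aᵀ)⁻¹ * Matrix.diagonal ω :=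
    Matrix.nonsing_inv_mul_cancel_right _ _ hdet
  have hcol : ∀ k, (((Aᵀ)⁻¹ * Matrix.diagonal ω * A⁻¹) *ᵥ (fun c => A c i)) k
      = ((Aᵀ)⁻¹ * Matrix.diagonal ω * A⁻¹ * A) k i := by
    intro k
    rw [Matrix.mul_apply]
    simp [Matrix.mulVec, dotProduct]
  have hentry : ∀ k, ((Aᵀ)⁻¹ * Matrix.diagonal ω) k i = A⁻¹ i k * ω i := by
    intro k
    rw [Matrix.mul_diagonal, ← Matrix.transpose_nonsing_inv, Matrix.transpose_apply]
  constructor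
  · rw [hcol, hmul, hentry, inv_A_diag E Λ hE hacyc, one_mul]
  · intro k hk
    rw [hcol, hmul, hentry, inv_A_parent E Λ hE hacyc i k hk, zero_mul]

/-- Positive definiteness of the model covariance, in the form we need. -/
lemma quad_zero (Λ : Matrix V V ℝ) (ω : V → ℝ) (hω : ∀ a, 0 < ω a)
    (hdet : IsUnit (1 - Λ).det) (d : V → ℝ)
    (hquad : d ⬝ᵥ ((((1 - Λ)ᵀ)⁻¹ * Matrix.diagonal ω * (1 - Λ)⁻¹) *ᵥ d) = 0) :
    d = 0 := by
  set A := 1 - Λ with hA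
  set y := A⁻¹ *ᵥ d with hy
  have h1 : (((Aᵀ)⁻¹ * Matrix.diagonal ω * A⁻¹) *ᵥ d)
      = (Aᵀ)⁻¹ *ᵥ (Matrix.diagonal ω *ᵥ y) := by
    rw [hy, Matrix.mulVec_mulVec, Matrix.mulVec_mulVec, Matrix.mul_assoc]
  have h2 : d ⬝ᵥ ((Aᵀ)⁻¹ *ᵥ (Matrix.diagonal ω *ᵥ y)) = y ⬝ᵥ (Matrix.diagonal ω *ᵥ y) := by
    rw [Matrix.dotProduct_mulVec, ← Matrix.transpose_nonsing_inv, Matrix.vecMul_transpose]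
  have h3 : y ⬝ᵥ (Matrix.diagonal ω *ᵥ y) = ∑ k, ω k * (y k * y k) := by
    simp only [dotProduct, Matrix.mulVec_diagonal]
    exact Finset.sum_congr rfl fun k _ => by ring
  rw [h1, h2, h3] at hquad
  have hterm : ∀ k ∈ Finset.univ, (0:ℝ) ≤ ω k * (y k * y k) :=
    fun k _ => mul_nonneg (hω k).le (mul_self_nonneg _)
  have hy0 : y = 0 := by
    funext k
    have := (Finset.sum_eq_zero_iff_of_nonneg hterm).mp hquad k (Finset.mem_univ k)
    have hyk := (mul_eq_zero.mp this).resolve_left (hω k).ne'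
    simpa using mul_self_eq_zero.mp hyk
  have : A *ᵥ y = d := by
    rw [hy, Matrix.mulVec_mulVec, Matrix.mul_nonsing_inv _ hdet, Matrix.one_mulVec]
  rw [← this, hy0, Matrix.mulVec_zero]

/-- Identifiability of `ω i` from `Σ` and the parent set of `i`. -/
lemma omega_unique (E E' : V → V → Prop) (Λ Λ' : Matrix V V ℝ) (ω ω' : V → ℝ)
    (hE : ∀ a b, ¬ E a b → Λ a b = 0) (hE' : ∀ a b, ¬ E' a b → Λ' a b = 0)
    (hacyc : ∀ i, ¬ Relation.TransGen E i i) (hacyc' : ∀ i, ¬ Relation.TransGen E' i i)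
    (hω : ∀ a, 0 < ω a)
    (heq : ((1 - Λ)ᵀ)⁻¹ * Matrix.diagonal ω * (1 - Λ)⁻¹
         = ((1 - Λ')ᵀ)⁻¹ * Matrix.diagonal ω' * (1 - Λ')⁻¹)
    (i : V) (hi : ∀ k, E k i ↔ E' k i) :
    ω i = ω' i := by
  have hvdiag := (sigma_col E Λ ω hE hacyc i).1
  have hvpar := (sigma_col E Λ ω hE hacyc i).2
  have hvdiag' := (sigma_col E' Λ' ω' hE' hacyc' i).1
  have hvpar' := (sigma_col E' Λ' ω' hE' hacyc' i).2
  rw [← heq] at hvdiag' hvpar'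
  set v : V → ℝ := fun k => (1 - Λ) k i with hv
  set v' : V → ℝ := fun k => (1 - Λ') k i with hv'
  have hvi : v i = 1 := by
    have : Λ i i = 0 := hE i i fun h => hacyc i (Relation.TransGen.single h)
    simp [hv, Matrix.sub_apply, this]
  have hvi' : v' i = 1 := by
    have : Λ' i i = 0 := hE' i i fun h => hacyc' i (Relation.TransGen.single h)
    simp [hv', Matrix.sub_apply, this]
  have hvk : ∀ k, ¬ E k i → k ≠ i → v k = 0 := by
    intro k hk hki
    simp [hv, Matrix.sub_apply, hE k i hk, Matrix.one_apply_ne hki]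
  have hvk' : ∀ k, ¬ E k i → k ≠ i → v' k = 0 := by
    intro k hk hki
    simp [hv', Matrix.sub_apply, hE' k i fun h => hk ((hi k).mpr h), Matrix.one_apply_ne hki]
  set d : V → ℝ := v - v' with hd
  have hdk : ∀ k, ¬ E k i → d k = 0 := by
    intro k hk
    rcases eq_or_ne k i with rfl | hki
    · simp [hd, hvi, hvi']
    · simp [hd, hvk k hk hki, hvk' k hk hki]
  have hSdk : ∀ k, E k i →
      ((((1 - Λ)ᵀ)⁻¹ * Matrix.diagonal ω * (1 - Λ)⁻¹) *ᵥ d) k = 0 := by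
    intro k hk
    rw [hd, Matrix.mulVec_sub]
    simp only [Pi.sub_apply]
    rw [hvpar k hk, hvpar' k ((hi k).mp hk), sub_zero]
  have hquad : d ⬝ᵥ ((((1 - Λ)ᵀ)⁻¹ * Matrix.diagonal ω * (1 - Λ)⁻¹) *ᵥ d) = 0 := by
    rw [dotProduct]
    refine Finset.sum_eq_zero fun k _ => ?_
    by_cases hk : E k i
    · rw [hSdk k hk, mul_zero]
    · rw [hdk k hk, zero_mul]
  have hd0 : d = 0 := quad_zero Λ ω hω (isUnit_det_A E Λ hE hacyc) d hquad
  have hvv : v = v' := sub_eq_zero.mp (hd ▸ hd0)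
  rw [← hvdiag, ← hvdiag', hvv]

lemma subset_dir (E₁ E₂ : V → V → Prop)
    (hacyc₁ : ∀ i, ¬ Relation.TransGen E₁ i i)
    (hacyc₂ : ∀ i, ¬ Relation.TransGen E₂ i i)
    (r : V → V → Prop) (hr : Equivalence r)
    (hMarkov : PHModel E₁ (· = ·) = PHModel E₂ (· = ·))
    (hpa : ∀ i, (∃ j, j ≠ i ∧ r i j) → ∀ k, (E₁ k i ↔ E₂ k i)) :
    PHModel E₁ r ⊆ PHModel E₂ r := by
  rintro C ⟨Λ₁, ω₁, hE1, hω1, hconst1, hdecomp1⟩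
  have hmem : C ∈ PHModel E₁ (· = ·) :=
    ⟨Λ₁, ω₁, hE1, hω1, fun a b h => by rw [h], hdecomp1⟩
  rw [hMarkov] at hmem
  obtain ⟨Λ₂, ω₂, hE2, hω2, _, hdecomp2⟩ := hmem
  refine ⟨Λ₂, ω₂, hE2, hω2, ?_, hdecomp2⟩
  intro a b hab
  rcases eq_or_ne a b with rfl | hne
  · rfl
  have heq : ((1 - Λ₁)ᵀ)⁻¹ * Matrix.diagonal ω₁ * (1 - Λ₁)⁻¹
      = ((1 - Λ₂)ᵀ)⁻¹ * Matrix.diagonal ω₂ * (1 - Λ₂)⁻¹ := by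
    rw [← hdecomp1, ← hdecomp2]
  have ha : ω₁ a = ω₂ a :=
    omega_unique E₁ E₂ Λ₁ Λ₂ ω₁ ω₂ hE1 hE2 hacyc₁ hacyc₂ hω1 heq a
      (hpa a ⟨b, hne.symm, hab⟩)
  have hb : ω₁ b = ω₂ b :=
    omega_unique E₁ E₂ Λ₁ Λ₂ ω₁ ω₂ hE1 hE2 hacyc₁ hacyc₂ hω1 heq b
      (hpa b ⟨a, hne, hr.symm hab⟩)
  rw [← ha, ← hb]
  exact hconst1 a b hab

end Stmt12Aux


/-- if (i) the DAGs `G₁, G₂` are Markov equivalent (equivalently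
`M_{G₁} = M_{G₂}`), and (ii) `pa_{G₁}(i) = pa_{G₂}(i)` for every node `i` in a block of
`Π` of size at least 2, then `M_{G₁,Π} = M_{G₂,Π}`. -/
theorem stmt12 {V : Type*} [Fintype V] [DecidableEq V]
    (E₁ E₂ : V → V → Prop)
    (hacyc₁ : ∀ i, ¬ Relation.TransGen E₁ i i)
    (hacyc₂ : ∀ i, ¬ Relation.TransGen E₂ i i)
    (r : V → V → Prop) (hr : Equivalence r)
    (hMarkov : PHModel E₁ (· = ·) = PHModel E₂ (· = ·))
    (hpa : ∀ i, (∃ j, j ≠ i ∧ r i j) → ∀ k, (E₁ k i ↔ E₂ k i)) :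
    PHModel E₁ r = PHModel E₂ r := by
  apply Set.Subset.antisymm
  · exact Stmt12Aux.subset_dir E₁ E₂ hacyc₁ hacyc₂ r hr hMarkov hpa
  · exact Stmt12Aux.subset_dir E₂ E₁ hacyc₂ hacyc₁ r hr hMarkov.symm
      (fun i h k => (hpa i h k).symm)
end

section
/- Let G₁ and G₂ be DAGs on vertex set V and Π a partition of V. If M_{G₁,Π} = M_{G₂,Π}, then pa_{G₁}(i) = pa_{G₂}(i) for every node i that belongs to a block of Π of size at least 2. -/
/-!
Let `k → i` be an edge of `G₁` and `j ≠ i` in the block of `i`. With `Λ = E_{ki}` and `ω = 1`,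
`C = (1 + E_{ki})ᵀ (1 + E_{ki})` lies in `M_{G₁,Π}`. Suppose `k → i` is not an edge of `G₂` and
write `C = (1 - M)⁻ᵀ diag ω (1 - M)⁻¹` with `M` supported on `G₂`. For a fixed acyclic relation, a
factorisation `C = Uᵀ D U` with `U - 1` supported on its transitive closure is unique.
If `k` is a `G₂`-ancestor of `i`, then `U = 1 + E_{ki}` is such a factorisation for `G₂` itself,
which forces `M = E_{ki}`, contradicting `¬ k → i` in `G₂`. Otherwise `G₂ + (i → k)` is still
acyclic, and the factorisation for it has `D_{ii} = 2` while `D_{jj} ∈ {1, 1/2}`, contradicting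
`ω_i = ω_j`.
-/

open Matrix

open Relation

section Acyclic
variable {V : Type*} {E : V → V → Prop} {u v a b : V}

def addEdge (E : V → V → Prop) (u v : V) (a b : V) : Prop := E a b ∨ (a = u ∧ b = v)

lemma transGen_addEdge (h : TransGen (addEdge E u v) a b) :
    TransGen E a b ∨ (ReflTransGen E a u ∧ ReflTransGen E v b) := by
  induction h with
  | single hab =>
    rcases hab with hab | ⟨rfl, rfl⟩
    · exact .inl (.single hab)
    · exact .inr ⟨.refl, .refl⟩
  | tail _ hbc ih =>
    rcases hbc with hbc | ⟨rfl, rfl⟩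
    · exact ih.imp (·.tail hbc) fun h => ⟨h.1, h.2.tail hbc⟩
    · exact .inr ⟨ih.elim TransGen.to_reflTransGen And.left, .refl⟩

lemma acyclic_addEdge (hE : ∀ x, ¬ TransGen E x x) (huv : u ≠ v) (hvu : ¬ TransGen E v u) :
    ∀ x, ¬ TransGen (addEdge E u v) x x := by
  intro x hx
  rcases transGen_addEdge hx with hxx | ⟨hxu, hvx⟩
  · exact hE x hxx
  · rcases reflTransGen_iff_eq_or_transGen.mp (hvx.trans hxu) with h | h
    exacts [huv h, hvu h]

lemma wellFounded_transGen [Finite V] (hE : ∀ x, ¬ TransGen E x x) :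
    WellFounded (TransGen E) :=
  haveI : Std.Irrefl (TransGen E) := ⟨hE⟩
  Finite.wellFounded_of_trans_of_irrefl _

end Acyclic

namespace Matrix

variable {V α : Type*}

def SupportedOn [Zero α] (X : Matrix V V α) (s : V → V → Prop) : Prop :=
  ∀ a b, X a b ≠ 0 → s a b

namespace SupportedOn

variable {s t : V → V → Prop} {X Y : Matrix V V α}

lemma mono [Zero α] (hX : X.SupportedOn s) (hst : ∀ a b, s a b → t a b) : X.SupportedOn t :=
  fun a b h => hst a b (hX a b h)

lemma apply_eq_zero [Zero α] (hX : X.SupportedOn s) {a b : V} (hs : ¬ s a b) : X a b = 0 :=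
  not_imp_comm.mp (hX a b) hs

lemma sub [AddGroup α] (hX : X.SupportedOn s) (hY : Y.SupportedOn s) : (X - Y).SupportedOn s := by
  intro a b h
  by_contra hs
  exact h (by simp [hX.apply_eq_zero hs, hY.apply_eq_zero hs])

lemma mul [Fintype V] [NonUnitalNonAssocSemiring α] [IsTrans V s] (hX : X.SupportedOn s)
    (hY : Y.SupportedOn s) : (X * Y).SupportedOn s := by
  intro a b h
  obtain ⟨c, -, hc⟩ := Finset.exists_ne_zero_of_sum_ne_zero h
  exact _root_.trans (hX a c (left_ne_zero_of_mul hc)) (hY c b (right_ne_zero_of_mul hc))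

end SupportedOn

lemma supportedOn_single [Zero α] [DecidableEq V] {s : V → V → Prop} {u v : V} (huv : s u v)
    (c : α) : (single u v c).SupportedOn s := by
  intro a b h
  by_contra hs
  exact h (single_apply_of_ne u v c a b fun ⟨hua, hvb⟩ => hs (hua ▸ hvb ▸ huv))

lemma eq_zero_of_transpose_one_add_mul_diagonal_mul_one_add [Fintype V] [DecidableEq V] [Ring α]
    [NoZeroDivisors α] {s : V → V → Prop} (hwf : WellFounded s) {X : Matrix V V α}
    (hX : X.SupportedOn s) {d ω : V → α} (hd : ∀ a, d a ≠ 0)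
    (h : (1 + X)ᵀ * diagonal d * (1 + X) = diagonal ω) : X = 0 := by
  -- Induction along `s`: once the rows of all `s`-predecessors of `a` vanish, column `a`
  -- of `1 + X` is the unit vector at `a`, so row `a` of the congruence is
  -- `d a • (1 + X) a = ω a • eₐ`.
  have hrow : ∀ a b, b ≠ a → X a b = 0 := by
    intro a
    induction a using hwf.induction with
    | _ a ih =>
    have hcol : ∀ c, (1 + X) c a = if c = a then 1 else 0 := by
      intro c
      by_cases hca : c = a
      · subst hca; simp [hX.apply_eq_zero (hwf.irrefl.irrefl c)]
      · rw [if_neg hca, add_apply, one_apply_ne hca, zero_add]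
        by_contra hne
        exact hne (ih c (hX c a hne) a (Ne.symm hca))
    intro b hba
    have := congrFun (congrFun h a) b
    simp only [mul_apply, transpose_apply, diagonal_apply, hcol] at this
    simpa [hba.symm, one_apply_ne hba.symm, hd a] using this
  ext a b
  by_cases hba : b = a
  · subst hba; exact hX.apply_eq_zero (hwf.irrefl.irrefl b)
  · exact hrow a b hba

lemma one_add_mul_one_sub_eq_one_of_congr [Fintype V] [DecidableEq V] [CommRing α]
    [NoZeroDivisors α] {s : V → V → Prop} [IsTrans V s] (hwf : WellFounded s) {N M : Matrix V V α}
    (hN : N.SupportedOn s) (hM : M.SupportedOn s) {d ω : V → α} (hd : ∀ a, d a ≠ 0)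
    (h : (1 - M)ᵀ * ((1 + N)ᵀ * diagonal d * (1 + N)) * (1 - M) = diagonal ω) :
    (1 + N) * (1 - M) = 1 ∧ d = ω := by
  have hR : (1 + N) * (1 - M) = 1 + (N - M - N * M) := by noncomm_ring
  have hRR : ((1 + N) * (1 - M))ᵀ * diagonal d * ((1 + N) * (1 - M)) = diagonal ω := by
    rw [← h, transpose_mul]; simp only [Matrix.mul_assoc]
  have hX : (N - M - N * M).SupportedOn s := (hN.sub hM).sub (hN.mul hM)
  rw [hR] at hRR ⊢
  have h0 := eq_zero_of_transpose_one_add_mul_diagonal_mul_one_add hwf hX hd hRR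
  rw [h0, add_zero] at hRR ⊢
  rw [transpose_one, Matrix.one_mul, Matrix.mul_one] at hRR
  exact ⟨rfl, diagonal_injective hRR⟩

lemma transpose_mul_mul_eq_of_eq_inv [Fintype V] [DecidableEq V] [CommRing α]
    {A C D : Matrix V V α} (hC : C ≠ 0) (h : C = (Aᵀ)⁻¹ * D * A⁻¹) : Aᵀ * C * A = D := by
  have hA : IsUnit A.det := by
    by_contra hA
    rw [nonsing_inv_apply_not_isUnit A hA, Matrix.mul_zero] at h
    exact hC h
  have hAT : IsUnit Aᵀ.det := by rwa [det_transpose]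
  rw [h, Matrix.mul_assoc, Matrix.mul_assoc, nonsing_inv_mul A hA, Matrix.mul_one,
    ← Matrix.mul_assoc, mul_nonsing_inv _ hAT, Matrix.one_mul]

end Matrix

section PHModel
variable {V : Type*} [Fintype V] [DecidableEq V] {E E₁ E₂ r : V → V → Prop} {M : Matrix V V ℝ}
  {ω : V → ℝ} {i j k : V}

lemma one_add_transpose_mul_one_add_mem_PHModel {Λ : Matrix V V ℝ} (hΛE : Λ.SupportedOn E)
    (hΛ : Λ * Λ = 0) : (1 + Λ)ᵀ * (1 + Λ) ∈ PHModel E r := by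
  have hinv : (1 - Λ)⁻¹ = 1 + Λ := inv_eq_left_inv (by simp [add_mul, mul_sub, hΛ])
  refine ⟨Λ, 1, fun a b hab => hΛE.apply_eq_zero hab, fun _ => one_pos, fun _ _ _ => rfl, ?_⟩
  rw [← transpose_nonsing_inv, hinv, diagonal_one', Matrix.mul_one]

lemma PHModel.exists_transpose_mul_mul_eq_diagonal {C : Matrix V V ℝ} (hC : C ∈ PHModel E r)
    (hC0 : C ≠ 0) : ∃ (M : Matrix V V ℝ) (ω : V → ℝ), M.SupportedOn E ∧
      (∀ a b, r a b → ω a = ω b) ∧ (1 - M)ᵀ * C * (1 - M) = diagonal ω := by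
  obtain ⟨M, ω, hM, -, hω, rfl⟩ := hC
  exact ⟨M, ω, fun a b hab => not_imp_comm.mp (hM a b) hab, hω,
    transpose_mul_mul_eq_of_eq_inv hC0 rfl⟩

-- The unit-triangular factorisation of `(1 + single k i 1)ᵀ * (1 + single k i 1)` for an order
-- in which `i` precedes `k`.
lemma transpose_one_add_single_mul_one_add_single (hik : i ≠ k) :
    (1 + single k i (1 : ℝ))ᵀ * (1 + single k i 1) =
      (1 + single i k (1 / 2 : ℝ))ᵀ * diagonal (1 + Pi.single i 1 - Pi.single k (1 / 2)) *
        (1 + single i k (1 / 2)) := by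
  have hd : diagonal (1 + Pi.single i 1 - Pi.single k (1 / 2) : V → ℝ) =
      1 + single i i 1 - single k k (1 / 2) := by
    rw [← diagonal_one', ← diagonal_single, ← diagonal_single, diagonal_add, diagonal_sub]
    rfl
  rw [hd]
  simp only [transpose_add, transpose_one, transpose_single, add_mul, mul_add, sub_mul, mul_sub,
    one_mul, mul_one, single_mul_single_same, single_mul_single_of_ne, ne_eq, hik, Ne.symm hik,
    not_false_eq_true]
  ext a b
  simp only [Matrix.add_apply, Matrix.sub_apply, single_apply, Matrix.zero_apply, one_apply]
  split_ifs <;> simp_all <;> norm_num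

lemma eq_single_of_congr_of_transGen (hE : ∀ x, ¬ TransGen E x x) (hM : M.SupportedOn E)
    (hki : TransGen E k i)
    (h : (1 - M)ᵀ * ((1 + single k i 1)ᵀ * (1 + single k i 1)) * (1 - M) = diagonal ω) :
    M = single k i 1 := by
  have hΛ : single k i (1 : ℝ) * single k i 1 = 0 :=
    single_mul_single_of_ne _ _ _ _ (fun hik : i = k => hE k (hik ▸ hki)) _
  obtain ⟨hinv, -⟩ := one_add_mul_one_sub_eq_one_of_congr (wellFounded_transGen hE)
    (supportedOn_single hki 1) (hM.mono fun _ _ => TransGen.single) (d := 1) (ω := ω)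
    (fun _ => one_ne_zero) (by rwa [diagonal_one', Matrix.mul_one])
  have hsq : (1 - single k i (1 : ℝ)) * (1 + single k i 1) = 1 := by
    simp [mul_add, sub_mul, hΛ]
  calc M = 1 - (1 - single k i 1) * ((1 + single k i 1) * (1 - M)) := by
        rw [← Matrix.mul_assoc, hsq, Matrix.one_mul, sub_sub_cancel]
    _ = single k i 1 := by rw [hinv, Matrix.mul_one, sub_sub_cancel]

lemma eq_of_congr_of_not_transGen (hE : ∀ x, ¬ TransGen E x x) (hM : M.SupportedOn E)
    (hik : i ≠ k) (hki : ¬ TransGen E k i)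
    (h : (1 - M)ᵀ * ((1 + single k i 1)ᵀ * (1 + single k i 1)) * (1 - M) = diagonal ω) :
    1 + Pi.single i 1 - Pi.single k (1 / 2) = ω := by
  have hik' : TransGen (addEdge E i k) i k := .single (.inr ⟨rfl, rfl⟩)
  refine (one_add_mul_one_sub_eq_one_of_congr
    (wellFounded_transGen (acyclic_addEdge hE hik hki)) (supportedOn_single hik' _)
    (hM.mono fun _ _ h => TransGen.single (Or.inl h)) (fun a => ?_)
    (transpose_one_add_single_mul_one_add_single hik ▸ h)).2
  simp only [Pi.add_apply, Pi.sub_apply, Pi.one_apply, Pi.single_apply]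
  split_ifs <;> norm_num

lemma PHModel.edge_of_subset (hsub : PHModel E₁ r ⊆ PHModel E₂ r)
    (hE₂ : ∀ x, ¬ TransGen E₂ x x) (hki : k ≠ i) (hji : j ≠ i) (hrij : r i j)
    (hE₁ : E₁ k i) : E₂ k i := by
  set Λ : Matrix V V ℝ := single k i 1
  have hΛ : Λ * Λ = 0 := single_mul_single_of_ne _ _ _ _ hki.symm _
  have hC : (1 + Λ)ᵀ * (1 + Λ) ≠ 0 := by
    have : Nonempty V := ⟨i⟩
    intro h0
    have : ((1 + Λ) * (1 - Λ))ᵀ * ((1 + Λ) * (1 - Λ)) = 0 := by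
      rw [transpose_mul, Matrix.mul_assoc, ← Matrix.mul_assoc (1 + Λ)ᵀ, h0]; simp
    simp [add_mul, mul_sub, hΛ] at this
  obtain ⟨M, ω, hM, hωr, hMC⟩ := PHModel.exists_transpose_mul_mul_eq_diagonal
    (hsub (one_add_transpose_mul_one_add_mem_PHModel (supportedOn_single hE₁ 1) hΛ)) hC
  by_cases hpath : TransGen E₂ k i
  · exact hM k i (by simp [eq_single_of_congr_of_transGen hE₂ hM hpath hMC])
  · have hω := hωr i j hrij
    rw [← eq_of_congr_of_not_transGen hE₂ hM hki.symm hpath hMC] at hω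
    simp [Pi.single_apply, hji, hki] at hω
    split_ifs at hω <;> norm_num at hω

end PHModel

theorem stmt13_general {V : Type*} [Fintype V] [DecidableEq V]
    (E₁ E₂ : V → V → Prop)
    (hacyc₁ : ∀ i, ¬ Relation.TransGen E₁ i i)
    (hacyc₂ : ∀ i, ¬ Relation.TransGen E₂ i i)
    (r : V → V → Prop)
    (hmodel : PHModel E₁ r = PHModel E₂ r) :
    ∀ i, (∃ j, j ≠ i ∧ r i j) → ∀ k, (E₁ k i ↔ E₂ k i) := by
  rintro i ⟨j, hji, hrij⟩ k
  have hne {E : V → V → Prop} (hE : ∀ x, ¬ TransGen E x x) (h : E k i) : k ≠ i :=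
    fun hki => hE i (.single (hki ▸ h))
  exact ⟨fun h => PHModel.edge_of_subset hmodel.le hacyc₂ (hne hacyc₁ h) hji hrij h,
    fun h => PHModel.edge_of_subset hmodel.ge hacyc₁ (hne hacyc₂ h) hji hrij h⟩

/-- if `M_{G₁,Π} = M_{G₂,Π}` then `pa_{G₁}(i) = pa_{G₂}(i)` for every
node `i` that belongs to a block of `Π` of size at least 2. -/
theorem stmt13 {V : Type*} [Fintype V] [DecidableEq V]
    (E₁ E₂ : V → V → Prop)
    (hacyc₁ : ∀ i, ¬ Relation.TransGen E₁ i i)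
    (hacyc₂ : ∀ i, ¬ Relation.TransGen E₂ i i)
    (r : V → V → Prop) (hr : Equivalence r)
    (hmodel : PHModel E₁ r = PHModel E₂ r) :
    ∀ i, (∃ j, j ≠ i ∧ r i j) → ∀ k, (E₁ k i ↔ E₂ k i) :=
  stmt13_general E₁ E₂ hacyc₁ hacyc₂ r hmodel
end

section
/- Let Π = {V} be the one-block (fully homoscedastic) partition. If two DAGs G₁, G₂ on V satisfy M_{G₁,Π} = M_{G₂,Π}, then G₁ = G₂; i.e., under the equal error variance assumption, distinct DAGs induce distinct models. -/
open Matrix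

lemma det_one_sub_of_acyclic {V : Type*} [Fintype V] [DecidableEq V]
    (E : V → V → Prop) (hacyc : ∀ i, ¬ Relation.TransGen E i i)
    (M : Matrix V V ℝ) (hM : ∀ a b, ¬ E a b → M a b = 0) :
    (1 - M).det = 1 := by
  classical
  have hdiag : ∀ a, M a a = 0 := fun a =>
    hM a a (fun h => hacyc a (Relation.TransGen.single h))
  rw [Matrix.det_apply, Finset.sum_eq_single (1 : Equiv.Perm V)]
  · simp [Matrix.sub_apply, hdiag]
  · intro σ _ hσ
    obtain ⟨a, ha⟩ : ∃ a, σ a ≠ a := by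
      by_contra h
      push_neg at h
      exact hσ (Equiv.ext h)
    -- show the product vanishes
    have : ∏ b, (1 - M) (σ b) b = 0 := by
      by_contra hprod
      have hfac : ∀ b, (1 - M) (σ b) b ≠ 0 := fun b hb =>
        hprod (Finset.prod_eq_zero (Finset.mem_univ b) hb)
      have hedge : ∀ b, σ b ≠ b → E (σ b) b := by
        intro b hb
        by_contra hE
        apply hfac b
        simp [Matrix.sub_apply, Matrix.one_apply, hb, hM _ _ hE]
      have hmove : ∀ m : ℕ, σ ((σ ^ m) a) ≠ (σ ^ m) a := by
        intro m h
        have : (σ ^ m) (σ a) = (σ ^ m) a := by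
          rw [← Equiv.Perm.mul_apply, ← pow_succ, pow_succ', Equiv.Perm.mul_apply, h]
        exact ha ((σ ^ m).injective this)
      have key : ∀ k : ℕ, Relation.TransGen E ((σ ^ (k + 1)) a) a := by
        intro k
        induction k with
        | zero =>
          have := hedge a ha
          simpa using Relation.TransGen.single this
        | succ k ih =>
          have h1 : E ((σ ^ (k + 2)) a) ((σ ^ (k + 1)) a) := by
            have := hedge ((σ ^ (k + 1)) a) (hmove (k + 1))
            have h2 : σ ((σ ^ (k + 1)) a) = (σ ^ (k + 2)) a := by
              rw [pow_succ' σ (k + 1), Equiv.Perm.mul_apply]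
            rwa [h2] at this
          exact Relation.TransGen.head h1 ih
      have hn : 0 < orderOf σ := orderOf_pos σ
      obtain ⟨k, hk⟩ : ∃ k, orderOf σ = k + 1 := ⟨orderOf σ - 1, by omega⟩
      have := key k
      rw [← hk, pow_orderOf_eq_one σ] at this
      exact hacyc a (by simpa using this)
    rw [this, smul_zero]
  · intro h
    exact absurd (Finset.mem_univ 1) h


lemma half {V : Type*} [Fintype V] [DecidableEq V]
    (E₁ E₂ : V → V → Prop)
    (hacyc₁ : ∀ i, ¬ Relation.TransGen E₁ i i)
    (hacyc₂ : ∀ i, ¬ Relation.TransGen E₂ i i)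
    (hsub : PHModel E₁ (fun _ _ => True) ⊆ PHModel E₂ (fun _ _ => True))
    {i j : V} (hij : E₁ i j) : E₂ i j := by
  classical
  have hne : i ≠ j := by
    rintro rfl
    exact hacyc₁ i (Relation.TransGen.single hij)
  set Λ : Matrix V V ℝ := Matrix.single i j 1 with hΛdef
  set X : Matrix V V ℝ := 1 - Λ with hXdef
  have hΛapp : ∀ a b, Λ a b = if i = a ∧ j = b then 1 else 0 := by
    intro a b; simp [hΛdef, Matrix.single, Matrix.of_apply]
  have hΛsupp : ∀ a b, ¬ E₁ a b → Λ a b = 0 := by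
    intro a b h
    rw [hΛapp]
    split
    · next hc =>
        obtain ⟨rfl, rfl⟩ := hc
        exact absurd hij h
    · rfl
  have hmem : ((Xᵀ)⁻¹ * Matrix.diagonal (fun _ : V => (1:ℝ)) * X⁻¹) ∈
      PHModel E₂ (fun _ _ => True) := by
    apply hsub
    exact ⟨Λ, fun _ => 1, hΛsupp, fun _ => one_pos, fun _ _ _ => rfl, rfl⟩
  obtain ⟨M, ω, hMsupp, hωpos, hωeq, hCeq⟩ := hmem
  set B : Matrix V V ℝ := 1 - M with hBdef
  have hdetX : X.det = 1 := det_one_sub_of_acyclic E₁ hacyc₁ Λ hΛsupp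
  have hdetB : B.det = 1 := det_one_sub_of_acyclic E₂ hacyc₂ M hMsupp
  -- equal variance is 1
  have hωc : ∀ a, ω a = ω i := fun a => hωeq a i trivial
  have hdetC : ((Xᵀ)⁻¹ * Matrix.diagonal (fun _ : V => (1:ℝ)) * X⁻¹).det = 1 := by
    simp [Matrix.det_mul, Matrix.det_nonsing_inv, Matrix.det_transpose, hdetX]
  have hdetC' : ((Xᵀ)⁻¹ * Matrix.diagonal (fun _ : V => (1:ℝ)) * X⁻¹).det
      = ω i ^ Fintype.card V := by
    rw [hCeq]
    simp [Matrix.det_mul, Matrix.det_nonsing_inv, Matrix.det_transpose, hdetB,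
      Matrix.det_diagonal]
    calc ∏ a : V, ω a = ∏ _a : V, ω i := by
          exact Finset.prod_congr rfl fun a _ => hωc a
      _ = ω i ^ Fintype.card V := by simp [Finset.prod_const, Finset.card_univ]
  have hcard : 0 < Fintype.card V := Fintype.card_pos_iff.mpr ⟨i⟩
  have hωi : ω i = 1 := by
    have hpow : ω i ^ Fintype.card V = 1 := by rw [← hdetC', hdetC]
    rcases lt_trichotomy (ω i) 1 with h | h | h
    · exfalso
      have := pow_lt_one₀ (hωpos i).le h (by omega : Fintype.card V ≠ 0)
      rw [hpow] at this
      exact lt_irrefl 1 this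
    · exact h
    · exfalso
      have := one_lt_pow₀ h (by omega : Fintype.card V ≠ 0)
      rw [hpow] at this
      exact lt_irrefl 1 this
  have hdiagω : Matrix.diagonal ω = 1 := by
    have : ω = fun _ => (1:ℝ) := funext fun a => (hωc a).trans hωi
    rw [this, Matrix.diagonal_one]
  rw [hdiagω] at hCeq
  -- X * Xᵀ = B * Bᵀ
  have hkey : X * Xᵀ = B * Bᵀ := by
    have h1 : (X * Xᵀ)⁻¹ = (B * Bᵀ)⁻¹ := by
      rw [Matrix.mul_inv_rev, Matrix.mul_inv_rev]
      simpa [Matrix.diagonal_one, Matrix.mul_one, mul_one] using hCeq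
    have hu1 : IsUnit (X * Xᵀ).det := by
      rw [Matrix.det_mul, Matrix.det_transpose, hdetX]; simp
    have hu2 : IsUnit (B * Bᵀ).det := by
      rw [Matrix.det_mul, Matrix.det_transpose, hdetB]; simp
    calc X * Xᵀ = ((X * Xᵀ)⁻¹)⁻¹ := (Matrix.nonsing_inv_nonsing_inv _ hu1).symm
      _ = ((B * Bᵀ)⁻¹)⁻¹ := by rw [h1]
      _ = B * Bᵀ := Matrix.nonsing_inv_nonsing_inv _ hu2
  have hentry : ∀ a b, ∑ c, X a c * X b c = ∑ c, B a c * B b c := by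
    intro a b
    have := congrFun (congrFun hkey a) b
    simpa [Matrix.mul_apply, Matrix.transpose_apply] using this
  have hMdiag : ∀ a, M a a = 0 := fun a =>
    hMsupp a a (fun h => hacyc₂ a (Relation.TransGen.single h))
  have hBdiag : ∀ a, B a a = 1 := by
    intro a; simp [hBdef, Matrix.sub_apply, Matrix.one_apply, hMdiag]
  have hXapp : ∀ a b, X a b = (if a = b then 1 else 0) - (if i = a ∧ j = b then 1 else 0) := by
    intro a b; simp [hXdef, Matrix.sub_apply, Matrix.one_apply, hΛapp]
  -- row j of B is e_j
  have hrowj : ∀ c, c ≠ j → B j c = 0 := by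
    have hjj : ∑ c, X j c * X j c = 1 := by
      have hXj : ∀ c, X j c = if j = c then 1 else 0 := by
        intro c
        rw [hXapp]
        have : ¬ (i = j ∧ j = c) := fun h => hne h.1
        simp [this]
      simp only [hXj]
      simp [Finset.sum_ite_eq, ite_mul, mul_ite]
    have hBj : ∑ c, B j c * B j c = 1 := by rw [← hentry, hjj]
    have hsplit := Finset.add_sum_erase Finset.univ (fun c => B j c * B j c)
      (Finset.mem_univ j)
    rw [hBj] at hsplit
    simp only [hBdiag, one_mul] at hsplit
    have hzero : ∑ c ∈ Finset.univ.erase j, B j c * B j c = 0 := by linarith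
    intro c hc
    have := (Finset.sum_eq_zero_iff_of_nonneg
      (fun c _ => mul_self_nonneg (B j c))).mp hzero c
      (Finset.mem_erase.mpr ⟨hc, Finset.mem_univ c⟩)
    exact (mul_self_eq_zero).mp this
  -- entry (i, j)
  have hBij : B i j = -1 := by
    have hL : ∑ c, X i c * X j c = -1 := by
      have hXj : ∀ c, X j c = if j = c then 1 else 0 := by
        intro c
        rw [hXapp]
        have : ¬ (i = j ∧ j = c) := fun h => hne h.1
        simp [this]
      have hXij : X i j = -1 := by rw [hXapp]; simp [hne]
      calc ∑ c, X i c * X j c = ∑ c, if j = c then X i c else 0 := by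
            apply Finset.sum_congr rfl
            intro c _
            rw [hXj]
            split <;> simp_all
        _ = X i j := by simp [Finset.sum_ite_eq]
        _ = -1 := hXij
    have hR : ∑ c, B i c * B j c = B i j := by
      rw [Finset.sum_eq_single j]
      · rw [hBdiag, mul_one]
      · intro c _ hc
        rw [hrowj c hc, mul_zero]
      · intro h; exact absurd (Finset.mem_univ j) h
    rw [hentry] at hL
    rw [hR] at hL
    exact hL
  by_contra hE
  have : M i j = 0 := hMsupp i j hE
  have : B i j = 0 := by simp [hBdef, Matrix.sub_apply, Matrix.one_apply, hne, this]
  rw [hBij] at this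
  norm_num at this

/-- under the equal error variance assumption (the one-block partition
`Π = {V}`), distinct DAGs induce distinct models: `M_{G₁,Π} = M_{G₂,Π}` implies
`G₁ = G₂`. -/
theorem stmt14 {V : Type*} [Fintype V] [DecidableEq V]
    (E₁ E₂ : V → V → Prop)
    (hacyc₁ : ∀ i, ¬ Relation.TransGen E₁ i i)
    (hacyc₂ : ∀ i, ¬ Relation.TransGen E₂ i i)
    (hmodel : PHModel E₁ (fun _ _ => True) = PHModel E₂ (fun _ _ => True)) :
    ∀ i j, E₁ i j ↔ E₂ i j := by
  intro i j
  constructor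
  · exact fun h => half E₁ E₂ hacyc₁ hacyc₂ hmodel.le h
  · exact fun h => half E₂ E₁ hacyc₂ hacyc₁ hmodel.ge h
end

section
/- Let G = (V,E) be a DAG, Λ ∈ ℝ^E, ω ∈ (0,∞)^V, and Σ = (I−Λ)^{-T} diag(ω)(I−Λ)^{-1}. Then for any node i and any set A with pa(i) ⊆ A ⊆ V \ de(i), it holds that Σ_{A,i} = Σ_{A,A} Λ_{A,i}, i.e., the regression coefficients of X_i on X_A recover the column of structural coefficients Λ_{A,i} (which is supported on pa(i)). -/
open Matrix

/-- for a DAG `G`, `Λ ∈ ℝ^E`, positive `ω` and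
`Σ = (I-Λ)^{-T} diag(ω) (I-Λ)^{-1}`, for any node `i` and any set `A` with
`pa(i) ⊆ A ⊆ V \ de(i)` one has `Σ_{A,i} = Σ_{A,A} Λ_{A,i}`: the regression
coefficients of `X_i` on `X_A` recover the structural coefficients. -/
theorem stmt16 {V : Type*} [Fintype V] [DecidableEq V]
    (E : V → V → Prop) (hacyc : ∀ i, ¬ Relation.TransGen E i i)
    (Λ : Matrix V V ℝ) (hsupp : ∀ i j, ¬ E i j → Λ i j = 0)
    (ω : V → ℝ) (hω : ∀ k, 0 < ω k)
    (Cov : Matrix V V ℝ)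
    (hCov : Cov = ((1 - Λ)ᵀ)⁻¹ * Matrix.diagonal ω * (1 - Λ)⁻¹)
    (i : V) (A : Finset V)
    (hpa : ∀ k, E k i → k ∈ A)
    (hde : ∀ j ∈ A, ¬ Relation.ReflTransGen E i j) :
    ∀ a ∈ A, Cov a i = ∑ b ∈ A, Cov a b * Λ b i := by
  classical
  intro a ha
  set M : Matrix V V ℝ := 1 - Λ with hM
  set n : ℕ := Fintype.card V with hn
  set f : V → ℕ := fun j => (Finset.univ.filter (fun k => Relation.TransGen E k j)).card
    with hfdef
  have hf : ∀ k j, E k j → f k < f j := by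
    intro k j hkj
    apply Finset.card_lt_card
    constructor
    · intro x hx
      simp only [Finset.mem_filter, Finset.mem_univ, true_and] at *
      exact hx.tail hkj
    · intro hsub
      have hk : k ∈ Finset.univ.filter (fun x => Relation.TransGen E x j) := by
        simp [Relation.TransGen.single hkj]
      have := hsub hk
      simp only [Finset.mem_filter, Finset.mem_univ, true_and] at this
      exact hacyc k this
  have hpow : ∀ m i j, (Λ ^ m) i j ≠ 0 → f i + m ≤ f j := by
    intro m
    induction m with
    | zero =>
      intro i j h
      rw [pow_zero] at h
      by_cases hij : i = j
      · subst hij; omega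
      · exact absurd (Matrix.one_apply_ne hij) h
    | succ m ih =>
      intro i j h
      rw [pow_succ, Matrix.mul_apply] at h
      obtain ⟨k, -, hk⟩ := Finset.exists_ne_zero_of_sum_ne_zero h
      have h1 : (Λ ^ m) i k ≠ 0 := fun hz => hk (by simp [hz])
      have h2 : Λ k j ≠ 0 := fun hz => hk (by simp [hz])
      have hE : E k j := by by_contra hE; exact h2 (hsupp k j hE)
      have hik := ih i k h1
      have hkj := hf k j hE
      omega
  have hreach : ∀ m i j, (Λ ^ m) i j ≠ 0 → Relation.ReflTransGen E i j := by
    intro m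
    induction m with
    | zero =>
      intro i j h
      rw [pow_zero] at h
      by_cases hij : i = j
      · subst hij; exact Relation.ReflTransGen.refl
      · exact absurd (Matrix.one_apply_ne hij) h
    | succ m ih =>
      intro i j h
      rw [pow_succ, Matrix.mul_apply] at h
      obtain ⟨k, -, hk⟩ := Finset.exists_ne_zero_of_sum_ne_zero h
      have h1 : (Λ ^ m) i k ≠ 0 := fun hz => hk (by simp [hz])
      have h2 : Λ k j ≠ 0 := fun hz => hk (by simp [hz])
      have hE : E k j := by by_contra hE; exact h2 (hsupp k j hE)
      exact (ih i k h1).tail hE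
  have hnil : Λ ^ n = 0 := by
    ext p q
    simp only [Matrix.zero_apply]
    by_contra h
    have h1 := hpow n p q h
    have h2 : f q < n := by
      have hq : q ∉ Finset.univ.filter (fun k => Relation.TransGen E k q) := by
        simp only [Finset.mem_filter, Finset.mem_univ, true_and]
        exact hacyc q
      have : (Finset.univ.filter (fun k => Relation.TransGen E k q)) ⊂ Finset.univ :=
        Finset.ssubset_univ_iff.mpr (fun hcon => hq (by simp [hcon]))
      calc f q < Finset.univ.card := Finset.card_lt_card this
        _ = n := Finset.card_univ
    omega
  set S : Matrix V V ℝ := ∑ k ∈ Finset.range n, Λ ^ k with hS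
  have hSM : S * M = 1 := by
    have h := geom_sum_mul Λ n
    rw [hnil, zero_sub] at h
    have h2 : S * Λ - S = -1 := by rw [mul_sub, mul_one] at h; exact h
    rw [hM, mul_sub, mul_one, ← neg_sub (S * Λ) S, h2, neg_neg]
  have hdet : IsUnit M.det := Matrix.isUnit_det_of_left_inverse hSM
  have hMinv : M⁻¹ = S := Matrix.inv_eq_left_inv hSM
  have hMa : M⁻¹ i a = 0 := by
    rw [hMinv, hS, Matrix.sum_apply]
    apply Finset.sum_eq_zero
    intro k _
    by_contra h
    exact hde a ha (hreach k i a h)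
  have hΛ0 : ∀ b, b ∉ A → Λ b i = 0 := fun b hb => hsupp b i (fun hE => hb (hpa b hE))
  have hsum : ∑ b ∈ A, Cov a b * Λ b i = ∑ b, Cov a b * Λ b i :=
    Finset.sum_subset (Finset.subset_univ A) (fun b _ hb => by rw [hΛ0 b hb, mul_zero])
  rw [hsum, ← Matrix.mul_apply]
  have hkey : Cov * M = ((1 - Λ)ᵀ)⁻¹ * Matrix.diagonal ω := by
    rw [hCov, hM, Matrix.mul_assoc, Matrix.nonsing_inv_mul _ hdet, Matrix.mul_one]
  have hzero : (Cov * M) a i = 0 := by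
    rw [hkey, Matrix.mul_diagonal, ← hM, ← Matrix.transpose_nonsing_inv,
      Matrix.transpose_apply, hMa, zero_mul]
  rw [hM, mul_sub, mul_one, Matrix.sub_apply] at hzero
  linarith [hzero]
end
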